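/- arXiv:1307.0978 — 4 statements merged into one kernel-verified Lean document; each statement's English description precedes it below -/
import Mathlib

section
/- Let f ∈ 𝓒 and θ ∈ ℝ, and let μ_{f,θ} be the unique maximizer over 𝓜 of μ ↦ θ μ[f] − D(μ||u). Then there exist integrable functions a, b ∈ L¹[0,1] such that μ_{f,θ} has density g_{f,θ}(x,y) := exp(θ f(x,y) + a(x) + b(y)) with respect to Lebesgue measure on [0,1]²; this density is uniquely determined almost everywhere; and Z(f,θ) := sup_{μ ∈ 𝓜} { θ μ[f] − D(μ||u) } = −∫₀¹ (a(x) + b(x)) dx. -/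
open MeasureTheory Filter Topology
open scoped ENNReal

noncomputable section

/-- The unit square `[0,1]²` in `ℝ × ℝ`. -/
def unitSq : Set (ℝ × ℝ) := Set.Icc 0 1 ×ˢ Set.Icc 0 1

/-- Lebesgue measure restricted to `[0,1]`. -/
def unif01 : Measure ℝ := volume.restrict (Set.Icc 0 1)

/-- Lebesgue (uniform) measure on the unit square. -/
def usq : Measure (ℝ × ℝ) := unif01.prod unif01

/-- `𝓜`: Borel probability measures on `[0,1]²` with both marginals Lebesgue on `[0,1]`. -/
def MM : Set (Measure (ℝ × ℝ)) :=
  {μ | IsProbabilityMeasure μ ∧ μ.map Prod.fst = unif01 ∧ μ.map Prod.snd = unif01}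

/-- The class `𝓒` of continuous functions on the unit square, not identically zero,
with all row and column integrals vanishing. -/
def memC (f : ℝ × ℝ → ℝ) : Prop :=
  ContinuousOn f unitSq ∧ (∃ p ∈ unitSq, f p ≠ 0) ∧
    (∀ x ∈ Set.Icc (0 : ℝ) 1, (∫ z in (0 : ℝ)..1, f (x, z)) = 0) ∧
    (∀ y ∈ Set.Icc (0 : ℝ) 1, (∫ z in (0 : ℝ)..1, f (z, y)) = 0)

open scoped Classical in
/-- Kullback–Leibler divergence `D(μ‖ν)`, equal to `∫ log(dμ/dν) dμ` when `μ ≪ ν`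
(and this integral exists), and `+∞` otherwise. -/
def KL (μ ν : Measure (ℝ × ℝ)) : ℝ≥0∞ :=
  if μ ≪ ν ∧ Integrable (fun x => Real.log ((μ.rnDeriv ν x).toReal)) μ then
    ENNReal.ofReal (∫ x, Real.log ((μ.rnDeriv ν x).toReal) ∂μ)
  else ⊤

/-- The objective `θ μ[f] − D(μ‖u)`, as an extended real. -/
def objE (f : ℝ × ℝ → ℝ) (θ : ℝ) (μ : Measure (ℝ × ℝ)) : EReal :=
  ((θ * ∫ p, f p ∂μ : ℝ) : EReal) - (KL μ usq : EReal)

/-- `∑_{i=1}^n f(i/n, π(i)/n)`. -/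
def permStat (f : ℝ × ℝ → ℝ) (n : ℕ) (π : Equiv.Perm (Fin n)) : ℝ :=
  ∑ i : Fin n, f ((i.1 + 1 : ℝ) / n, ((π i).1 + 1 : ℝ) / n)

/-- The log normalizing constant `Z_n(f,θ)`. -/
def Zn (f : ℝ × ℝ → ℝ) (θ : ℝ) (n : ℕ) : ℝ :=
  Real.log (∑ π : Equiv.Perm (Fin n), Real.exp (θ * permStat f n π))

open scoped Classical in
/-- The probability that a sample from `Q_{n,f,θ}` satisfies `p`. -/
def Qprob (f : ℝ × ℝ → ℝ) (θ : ℝ) (n : ℕ) (p : Equiv.Perm (Fin n) → Prop) : ℝ :=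
  ∑ π : Equiv.Perm (Fin n), if p π then Real.exp (θ * permStat f n π - Zn f θ n) else 0


/-!
Extend `θ f` to a bounded continuous `ψ` on `ℝ²`. The heart of the proof is a solution of the
Schrödinger system: potentials `a, b` with `∫ exp (ψ (x, y) + a x + b y) dy = 1` for every `x`
and `∫ exp (ψ (x, y) + a x + b y) dx = 1` for every `y`. They minimize the dual objective
`J a b = ∬ exp (ψ + a ⊕ b) - ∫ a - ∫ b`, whose partial minimizer in `a` is the entropic
`c`-transform `a = T b`. The reduced functional `b ↦ J (T b) b` is continuous and invariant under
constant shifts, so it attains its minimum on a set of normalized potentials with a fixed modulus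
of continuity, which is compact by Arzelà–Ascoli. At a minimizer one round of coordinate descent
cannot descend, and the equality case of `exp u ≥ 1 + u` makes it a fixed point.

The density `G = exp (ψ + a ⊕ b)` then defines a measure `μ_G ∈ 𝓜`. For `ν ∈ 𝓜` one has
`ν[log G] = θ ν[f] + ∫ a + ∫ b` because the marginals are uniform, and the Gibbs variational
identity gives `θ ν[f] - D(ν‖u) = -∫ (a + b) - D(ν‖μ_G)`. So the supremum is `-∫ (a + b)`,
attained exactly at `ν = μ_G`.
-/
open Real BoundedContinuousFunction

section LogIntegralExp

variable {α : Type*} [MeasurableSpace α] {μ : Measure α}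

lemma integrable_exp_of_bcf [TopologicalSpace α] [OpensMeasurableSpace α] [IsFiniteMeasure μ]
    (g : α →ᵇ ℝ) : Integrable (fun x => exp (g x)) μ :=
  .of_bound g.continuous.rexp.aestronglyMeasurable (exp ‖g‖) <| ae_of_all _ fun x => by
    rw [norm_eq_abs, abs_of_pos (exp_pos _)]
    exact exp_le_exp.2 ((le_abs_self _).trans (g.norm_coe_le_norm x))

variable [NeZero μ] {f g : α → ℝ} {c : ℝ}

lemma log_integral_exp_le_of_ae_le (hf : Integrable (fun x => exp (f x)) μ)
    (hg : Integrable (fun x => exp (g x)) μ) (h : ∀ᵐ x ∂μ, f x ≤ g x + c) :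
    log (∫ x, exp (f x) ∂μ) ≤ log (∫ x, exp (g x) ∂μ) + c := by
  have hle : ∫ x, exp (f x) ∂μ ≤ exp c * ∫ x, exp (g x) ∂μ := by
    rw [← integral_const_mul]
    refine integral_mono_ae hf (hg.const_mul _) ?_
    filter_upwards [h] with x hx
    rw [← exp_add]
    exact exp_le_exp.2 (by linarith)
  calc log (∫ x, exp (f x) ∂μ) ≤ log (exp c * ∫ x, exp (g x) ∂μ) :=
        log_le_log (integral_exp_pos hf) hle
    _ = log (∫ x, exp (g x) ∂μ) + c := by
        rw [log_mul (exp_pos c).ne' (integral_exp_pos hg).ne', log_exp, add_comm]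

lemma abs_log_integral_exp_sub_le (hf : Integrable (fun x => exp (f x)) μ)
    (hg : Integrable (fun x => exp (g x)) μ) (h : ∀ᵐ x ∂μ, |f x - g x| ≤ c) :
    |log (∫ x, exp (f x) ∂μ) - log (∫ x, exp (g x) ∂μ)| ≤ c := by
  have hfg := log_integral_exp_le_of_ae_le hf hg (h.mono fun x hx => by
    linarith [(abs_le.1 hx).2])
  have hgf := log_integral_exp_le_of_ae_le hg hf (h.mono fun x hx => by
    linarith [(abs_le.1 hx).1])
  rw [abs_sub_le_iff]
  constructor <;> linarith

end LogIntegralExp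

lemma lipschitzWith_integral_bcf {X : Type*} [TopologicalSpace X] [MeasurableSpace X]
    [OpensMeasurableSpace X] (μ : Measure X) [IsProbabilityMeasure μ] :
    LipschitzWith 1 fun b : X →ᵇ ℝ => ∫ x, b x ∂μ :=
  LipschitzWith.mk_one fun b b' => by
    rw [dist_eq_norm, dist_eq_norm, ← integral_sub (b.integrable μ) (b'.integrable μ)]
    exact (b - b').norm_integral_le_norm μ

lemma exp_sub_self_sub_one_nonneg (u : ℝ) : 0 ≤ exp u - u - 1 := by
  linarith [add_one_le_exp u]

lemma eq_zero_of_exp_sub_self_sub_one_eq_zero {u : ℝ} (h : exp u - u - 1 = 0) : u = 0 := by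
  by_contra hu
  linarith [add_one_lt_exp hu]

section SoftTransform

variable (m : Measure ℝ) [IsProbabilityMeasure m] (ψ : ℝ × ℝ →ᵇ ℝ)

lemma integrable_exp_kernel (b : ℝ →ᵇ ℝ) (x : ℝ) :
    Integrable (fun y => exp (ψ (x, y) + b y)) m :=
  integrable_exp_of_bcf (ψ.compContinuous ⟨fun y => (x, y), by fun_prop⟩ + b)

lemma abs_kernel_le (b : ℝ →ᵇ ℝ) (x y : ℝ) : |ψ (x, y) + b y| ≤ ‖ψ‖ + ‖b‖ :=
  (abs_add_le _ _).trans (add_le_add (ψ.norm_coe_le_norm _) (b.norm_coe_le_norm _))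

lemma continuous_integral_exp_kernel (b : ℝ →ᵇ ℝ) :
    Continuous fun x => ∫ y, exp (ψ (x, y) + b y) ∂m := by
  refine continuous_of_dominated (bound := fun _ => exp (‖ψ‖ + ‖b‖))
    (fun x => (integrable_exp_kernel m ψ b x).aestronglyMeasurable) (fun x => ae_of_all _ ?_)
    (integrable_const _) (ae_of_all _ fun y => by fun_prop)
  intro y
  rw [norm_eq_abs, abs_of_pos (exp_pos _)]
  exact exp_le_exp.2 ((le_abs_self _).trans (abs_kernel_le ψ b x y))

lemma abs_log_integral_exp_kernel_le (b : ℝ →ᵇ ℝ) (x : ℝ) :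
    |log (∫ y, exp (ψ (x, y) + b y) ∂m)| ≤ ‖ψ‖ + ‖b‖ := by
  simpa using abs_log_integral_exp_sub_le (integrable_exp_kernel m ψ b x)
    (integrable_const (exp 0)) (ae_of_all _ fun y => by simpa using abs_kernel_le ψ b x y)

/-- The entropic `c`-transform of `b`: the unique `a` making every row integral of
`exp (ψ (x, y) + a x + b y)` equal to one. -/
def softTransform (b : ℝ →ᵇ ℝ) : ℝ →ᵇ ℝ :=
  ofNormedAddCommGroup (fun x => -log (∫ y, exp (ψ (x, y) + b y) ∂m))
    ((continuous_integral_exp_kernel m ψ b).log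
      fun x => (integral_exp_pos (integrable_exp_kernel m ψ b x)).ne').neg
    (‖ψ‖ + ‖b‖) fun x => by rw [norm_neg, norm_eq_abs]; exact abs_log_integral_exp_kernel_le m ψ b x

variable {m ψ}

lemma softTransform_apply (b : ℝ →ᵇ ℝ) (x : ℝ) :
    softTransform m ψ b x = -log (∫ y, exp (ψ (x, y) + b y) ∂m) := rfl

lemma integral_exp_kernel_eq (b : ℝ →ᵇ ℝ) (x : ℝ) :
    ∫ y, exp (ψ (x, y) + b y) ∂m = exp (-softTransform m ψ b x) := by
  rw [softTransform_apply, neg_neg, exp_log (integral_exp_pos (integrable_exp_kernel m ψ b x))]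

lemma integral_exp_softTransform (b : ℝ →ᵇ ℝ) (x : ℝ) :
    ∫ y, exp (ψ (x, y) + softTransform m ψ b x + b y) ∂m = 1 := by
  simp_rw [add_right_comm _ (softTransform m ψ b x), exp_add _ (softTransform m ψ b x),
    integral_mul_const, integral_exp_kernel_eq, ← exp_add, neg_add_cancel, exp_zero]

lemma abs_softTransform_sub_le (b : ℝ →ᵇ ℝ) {x x' c : ℝ}
    (h : ∀ᵐ y ∂m, |ψ (x, y) - ψ (x', y)| ≤ c) :
    |softTransform m ψ b x - softTransform m ψ b x'| ≤ c := by
  rw [softTransform_apply, softTransform_apply, neg_sub_neg, abs_sub_comm]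
  exact abs_log_integral_exp_sub_le (integrable_exp_kernel m ψ b x)
    (integrable_exp_kernel m ψ b x') (h.mono fun y hy => by rwa [add_sub_add_right_eq_sub])

lemma lipschitzWith_softTransform : LipschitzWith 1 (softTransform m ψ) :=
  LipschitzWith.mk_one fun b b' => (dist_le dist_nonneg).2 fun x => by
    rw [Real.dist_eq, softTransform_apply, softTransform_apply, neg_sub_neg, abs_sub_comm]
    exact abs_log_integral_exp_sub_le (integrable_exp_kernel m ψ b x)
      (integrable_exp_kernel m ψ b' x) (ae_of_all _ fun y => by
        rw [add_sub_add_left_eq_sub, ← Real.dist_eq]; exact dist_coe_le_dist y)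

lemma softTransform_congr_ae {b b' : ℝ →ᵇ ℝ} (h : b =ᵐ[m] b') :
    softTransform m ψ b = softTransform m ψ b' := by
  ext x
  simp only [softTransform_apply]
  congr 2
  exact integral_congr_ae (h.mono fun y hy => by simp only [hy])

lemma softTransform_sub_const (b : ℝ →ᵇ ℝ) (r : ℝ) :
    softTransform m ψ (b - const ℝ r) = softTransform m ψ b + const ℝ r := by
  ext x
  have hr : ∫ y, exp (ψ (x, y) + (b - const ℝ r) y) ∂m
      = exp (-r) * ∫ y, exp (ψ (x, y) + b y) ∂m := by
    rw [← integral_const_mul]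
    congr 1 with y
    rw [← exp_add]
    simp only [coe_sub, const_apply, Pi.sub_apply]
    ring_nf
  rw [softTransform_apply, hr, log_mul (exp_pos _).ne'
    (integral_exp_pos (integrable_exp_kernel m ψ b x)).ne', log_exp, coe_add, Pi.add_apply,
    softTransform_apply, const_apply]
  ring

end SoftTransform

section DualObjective

variable (m : Measure ℝ) [IsProbabilityMeasure m] (ψ : ℝ × ℝ →ᵇ ℝ)

/-- The dual objective of entropic optimal transport with reward `ψ`. -/
def dualObjective (a b : ℝ →ᵇ ℝ) : ℝ :=
  ∫ p, exp (ψ p + a p.1 + b p.2) ∂(m.prod m) - ∫ x, a x ∂m - ∫ y, b y ∂m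

variable {m ψ}

lemma dualObjective_eq (a b : ℝ →ᵇ ℝ) :
    dualObjective m ψ a b
      = ∫ x, exp (a x - softTransform m ψ b x) ∂m - ∫ x, a x ∂m - ∫ y, b y ∂m := by
  have hint : Integrable (fun p : ℝ × ℝ => exp (ψ p + a p.1 + b p.2)) (m.prod m) :=
    integrable_exp_of_bcf (ψ + a.compContinuous .fst + b.compContinuous .snd)
  have hrow (x : ℝ) : ∫ y, exp (ψ (x, y) + a x + b y) ∂m = exp (a x - softTransform m ψ b x) := by
    simp_rw [add_right_comm _ (a x), exp_add _ (a x), integral_mul_const,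
      integral_exp_kernel_eq, ← exp_add, neg_add_eq_sub]
  rw [dualObjective, integral_prod _ hint]
  simp only [hrow]

lemma dualObjective_swap (a b : ℝ →ᵇ ℝ) :
    dualObjective m (ψ.compContinuous .prodSwap) b a = dualObjective m ψ a b := by
  rw [dualObjective, dualObjective, ← integral_prod_swap]
  simp only [compContinuous_apply, ContinuousMap.prodSwap_apply, Prod.fst_swap, Prod.snd_swap,
    add_right_comm _ (b _)]
  ring

lemma dualObjective_softTransform (b : ℝ →ᵇ ℝ) :
    dualObjective m ψ (softTransform m ψ b) b
      = 1 - ∫ x, softTransform m ψ b x ∂m - ∫ y, b y ∂m := by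
  simp [dualObjective_eq]

lemma dualObjective_sub_dualObjective_softTransform (a b : ℝ →ᵇ ℝ) :
    dualObjective m ψ a b - dualObjective m ψ (softTransform m ψ b) b
      = ∫ x, (exp (a x - softTransform m ψ b x) - (a x - softTransform m ψ b x) - 1) ∂m := by
  have hexp : Integrable (fun x => exp (a x - softTransform m ψ b x)) m :=
    integrable_exp_of_bcf (a - softTransform m ψ b)
  have hsub : Integrable (fun x => a x - softTransform m ψ b x) m :=
    (a - softTransform m ψ b).integrable m
  have hdiff : Integrable
      (fun x => exp (a x - softTransform m ψ b x) - (a x - softTransform m ψ b x)) m :=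
    hexp.sub hsub
  rw [dualObjective_eq, dualObjective_eq, integral_sub hdiff (integrable_const 1),
    integral_sub hexp hsub, integral_sub (a.integrable m) ((softTransform m ψ b).integrable m)]
  simp only [sub_self, exp_zero, integral_const, probReal_univ, smul_eq_mul, mul_one,
    sub_sub_sub_cancel_right]
  ring

lemma dualObjective_softTransform_le (a b : ℝ →ᵇ ℝ) :
    dualObjective m ψ (softTransform m ψ b) b ≤ dualObjective m ψ a b := by
  have : 0 ≤ ∫ x, (exp (a x - softTransform m ψ b x) - (a x - softTransform m ψ b x) - 1) ∂m :=
    integral_nonneg fun x => exp_sub_self_sub_one_nonneg _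
  linarith [dualObjective_sub_dualObjective_softTransform (m := m) (ψ := ψ) a b]

lemma ae_eq_softTransform_of_dualObjective_eq {a b : ℝ →ᵇ ℝ}
    (h : dualObjective m ψ a b = dualObjective m ψ (softTransform m ψ b) b) :
    a =ᵐ[m] softTransform m ψ b := by
  set δ := a - softTransform m ψ b
  have hzero := dualObjective_sub_dualObjective_softTransform (m := m) (ψ := ψ) a b
  rw [h, sub_self, eq_comm] at hzero
  have hint : Integrable (fun x => exp (δ x) - δ x - 1) m :=
    ((integrable_exp_of_bcf δ).sub (δ.integrable m)).sub (integrable_const 1)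
  filter_upwards [(integral_eq_zero_iff_of_nonneg (fun x => exp_sub_self_sub_one_nonneg (δ x))
    hint).1 hzero] with x hx
  exact sub_eq_zero.1 (eq_zero_of_exp_sub_self_sub_one_eq_zero hx)

lemma continuous_dualObjective_softTransform :
    Continuous fun b => dualObjective m ψ (softTransform m ψ b) b := by
  simp only [dualObjective_softTransform]
  exact (continuous_const.sub ((lipschitzWith_integral_bcf m).continuous.comp
    lipschitzWith_softTransform.continuous)).sub (lipschitzWith_integral_bcf m).continuous

lemma dualObjective_softTransform_sub_const (b : ℝ →ᵇ ℝ) (r : ℝ) :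
    dualObjective m ψ (softTransform m ψ (b - const ℝ r)) (b - const ℝ r)
      = dualObjective m ψ (softTransform m ψ b) b := by
  rw [dualObjective_softTransform, dualObjective_softTransform, softTransform_sub_const]
  simp only [coe_add, coe_sub, Pi.add_apply, Pi.sub_apply, const_apply]
  rw [integral_add ((softTransform m ψ b).integrable m) (integrable_const r),
    integral_sub (b.integrable m) (integrable_const r)]
  simp only [integral_const, probReal_univ, smul_eq_mul, one_mul]
  ring

lemma dualObjective_softTransform_congr_ae {b b' : ℝ →ᵇ ℝ} (h : b =ᵐ[m] b') :
    dualObjective m ψ (softTransform m ψ b) b = dualObjective m ψ (softTransform m ψ b') b' := by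
  rw [dualObjective_softTransform, dualObjective_softTransform, softTransform_congr_ae h,
    integral_congr_ae h]

end DualObjective

section Existence

open unitInterval

def projUnitInterval : C(ℝ, I) := ⟨Set.projIcc 0 1 zero_le_one, continuous_projIcc⟩

/-- The modulus condition is the one that `softTransform m (ψ.compContinuous .prodSwap)` inherits
from `ψ`, so this compact set is stable under that transform followed by normalization at `0`. -/
def admissiblePotentials (ψ : ℝ × ℝ →ᵇ ℝ) : Set (I →ᵇ ℝ) :=
  {β | β 0 = 0 ∧ ∀ t t' : I, ∀ c : ℝ,
    (∀ s ∈ I, |ψ (s, t) - ψ (s, t')| ≤ c) → |β t - β t'| ≤ c}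

variable {ψ : ℝ × ℝ →ᵇ ℝ}

lemma isClosed_admissiblePotentials : IsClosed (admissiblePotentials ψ) := by
  simp only [admissiblePotentials, Set.ofPred_and, Set.ofPred_forall]
  exact (isClosed_eq (continuous_eval_const 0) continuous_const).inter <|
    isClosed_iInter fun t => isClosed_iInter fun t' => isClosed_iInter fun c =>
      isClosed_iInter fun _ => isClosed_le
        ((continuous_eval_const t).sub (continuous_eval_const t')).abs continuous_const

lemma abs_le_of_mem_admissiblePotentials {β : I →ᵇ ℝ} (hβ : β ∈ admissiblePotentials ψ)
    (t : I) : |β t| ≤ 2 * ‖ψ‖ := by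
  have h := hβ.2 t 0 (2 * ‖ψ‖) fun s _ => by
    rw [two_mul, ← norm_eq_abs]
    exact (norm_sub_le _ _).trans (add_le_add (ψ.norm_coe_le_norm _) (ψ.norm_coe_le_norm _))
  rwa [hβ.1, sub_zero] at h

lemma equicontinuous_admissiblePotentials :
    Equicontinuous ((↑) : admissiblePotentials ψ → I → ℝ) := by
  intro t₀
  rw [Metric.equicontinuousAt_iff_right]
  intro ε hε
  obtain ⟨δ, hδ, hψδ⟩ := Metric.uniformContinuousOn_iff.1
    ((isCompact_Icc.prod isCompact_Icc).uniformContinuousOn_of_continuous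
      (s := I ×ˢ I) ψ.continuous.continuousOn) (ε / 2) (half_pos hε)
  filter_upwards [Metric.ball_mem_nhds t₀ hδ] with t ht
  rintro ⟨β, hβ⟩
  have hmod := hβ.2 t₀ t (ε / 2) fun s hs => by
    rw [abs_sub_comm, ← Real.dist_eq]
    refine (hψδ (s, t) ⟨hs, t.2⟩ (s, t₀) ⟨hs, t₀.2⟩ ?_).le
    simpa [Prod.dist_eq, Subtype.dist_eq] using ht
  rw [Real.dist_eq]
  linarith

lemma isCompact_admissiblePotentials : IsCompact (admissiblePotentials ψ) :=
  arzela_ascoli₂ (Set.Icc (-(2 * ‖ψ‖)) (2 * ‖ψ‖)) isCompact_Icc _ isClosed_admissiblePotentials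
    (fun _ t hβ => abs_le.1 (abs_le_of_mem_admissiblePotentials hβ t))
    equicontinuous_admissiblePotentials

lemma zero_mem_admissiblePotentials : 0 ∈ admissiblePotentials ψ :=
  ⟨rfl, fun _ _ c h => by simpa using (abs_nonneg _).trans (h 0 ⟨le_rfl, zero_le_one⟩)⟩

lemma restrict_sub_const_mem_admissiblePotentials {b : ℝ →ᵇ ℝ}
    (hb : ∀ t t' c : ℝ, (∀ s ∈ I, |ψ (s, t) - ψ (s, t')| ≤ c) → |b t - b t'| ≤ c) :
    b.compContinuous ⟨Subtype.val, continuous_subtype_val⟩ - const I (b 0)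
      ∈ admissiblePotentials ψ := by
  refine ⟨by simp, fun t t' c h => ?_⟩
  simpa using hb t t' c h

lemma extend_restrict_ae_eq {m : Measure ℝ} (hm : ∀ᵐ y ∂m, y ∈ I) (b : ℝ →ᵇ ℝ) :
    (b.compContinuous ⟨Subtype.val, continuous_subtype_val⟩ - const I (b 0)).compContinuous
      projUnitInterval =ᵐ[m] b - const ℝ (b 0) := by
  filter_upwards [hm] with y hy
  simp [projUnitInterval, Set.projIcc_of_mem _ hy]

variable {m : Measure ℝ} [IsProbabilityMeasure m]

lemma abs_softTransform_swap_sub_le (hm : ∀ᵐ y ∂m, y ∈ I) (a : ℝ →ᵇ ℝ) {t t' c : ℝ}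
    (h : ∀ s ∈ I, |ψ (s, t) - ψ (s, t')| ≤ c) :
    |softTransform m (ψ.compContinuous .prodSwap) a t
      - softTransform m (ψ.compContinuous .prodSwap) a t'| ≤ c :=
  abs_softTransform_sub_le a (hm.mono fun s hs => h s hs)

theorem exists_softTransform_eq_and_eq (hm : ∀ᵐ y ∂m, y ∈ I) (ψ : ℝ × ℝ →ᵇ ℝ) :
    ∃ a b : ℝ →ᵇ ℝ, softTransform m ψ b = a ∧
      softTransform m (ψ.compContinuous .prodSwap) a = b := by
  set ψ' := ψ.compContinuous .prodSwap
  set Φ := fun b => dualObjective m ψ (softTransform m ψ b) b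
  obtain ⟨β, -, hβ⟩ := isCompact_admissiblePotentials.exists_isMinOn
    ⟨0, zero_mem_admissiblePotentials⟩
    ((continuous_dualObjective_softTransform (m := m) (ψ := ψ)).comp
      (continuous_compContinuous projUnitInterval)).continuousOn (s := admissiblePotentials ψ)
  set b₀ := β.compContinuous projUnitInterval
  set a := softTransform m ψ b₀
  set b := softTransform m ψ' a
  have hb_mem := restrict_sub_const_mem_admissiblePotentials fun t t' c h =>
    abs_softTransform_swap_sub_le hm a (ψ := ψ) h
  have hΦ : Φ b₀ ≤ Φ b := by
    have := hβ hb_mem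
    simp only [Function.comp_apply, Set.mem_ofPred_eq] at this
    rwa [dualObjective_softTransform_congr_ae (extend_restrict_ae_eq hm b),
      dualObjective_softTransform_sub_const] at this
  -- one round of coordinate descent from `(a, b₀)` ends at `Φ b ≥ Φ b₀`, so no step descends
  have hdesc : dualObjective m ψ' b a ≤ dualObjective m ψ' b₀ a :=
    dualObjective_softTransform_le b₀ a
  have h₁ : Φ b ≤ dualObjective m ψ a b := dualObjective_softTransform_le a b
  have h₂ : dualObjective m ψ' b a = dualObjective m ψ a b := dualObjective_swap a b
  have h₃ : dualObjective m ψ' b₀ a = Φ b₀ := dualObjective_swap a b₀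
  have hb₀ : b₀ =ᵐ[m] b := ae_eq_softTransform_of_dualObjective_eq (by linarith)
  exact ⟨a, b, softTransform_congr_ae hb₀.symm, rfl⟩

end Existence

section GibbsVariationalPrinciple

open InformationTheory

variable {α : Type*} [MeasurableSpace α] {ν ρ : Measure α} [IsProbabilityMeasure ν]
  [IsProbabilityMeasure ρ] {φ : α → ℝ}

lemma coe_integral_sub_sub_klDiv (hφ : ∫ x, exp (φ x) ∂ρ = 1) (hφν : Integrable φ ν) (c : ℝ) :
    ((∫ x, φ x ∂ν - c : ℝ) : EReal) - klDiv ν ρ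
      = ((-c : ℝ) : EReal) - klDiv ν (ρ.tilted φ) := by
  have hexp : Integrable (fun x => exp (φ x)) ρ := by
    by_contra h
    rw [integral_undef h] at hφ
    exact zero_ne_one hφ
  have : IsProbabilityMeasure (ρ.tilted φ) := isProbabilityMeasure_tilted hexp
  by_cases hac : ν ≪ ρ
  swap
  · have hac' : ¬ ν ≪ ρ.tilted φ := fun h => hac (h.trans (tilted_absolutelyContinuous ρ φ))
    simp [klDiv_of_not_ac hac, klDiv_of_not_ac hac', EReal.sub_top]
  have hac' : ν ≪ ρ.tilted φ := hac.trans (absolutelyContinuous_tilted hexp)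
  have hllr : llr ν (ρ.tilted φ) =ᵐ[ν] fun x => llr ν ρ x - φ x := by
    filter_upwards [llr_tilted_right hac hexp] with x hx
    rw [hx, hφ, log_one]
    ring
  by_cases hint : Integrable (llr ν ρ) ν
  · have hint' : Integrable (llr ν (ρ.tilted φ)) ν := (hint.sub hφν).congr hllr.symm
    rw [← EReal.coe_ennreal_toReal (klDiv_ne_top hac hint),
      ← EReal.coe_ennreal_toReal (klDiv_ne_top hac' hint'),
      toReal_klDiv_of_measure_eq hac (by simp), toReal_klDiv_of_measure_eq hac' (by simp),
      integral_congr_ae hllr, integral_sub hint hφν, ← EReal.coe_sub, ← EReal.coe_sub]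
    congr 1
    ring
  · have hint' : ¬ Integrable (llr ν (ρ.tilted φ)) ν := fun h =>
      hint ((h.add hφν).congr (hllr.mono fun x hx => by simp [hx]))
    simp [klDiv_of_not_integrable hint, klDiv_of_not_integrable hint', EReal.sub_top]

end GibbsVariationalPrinciple

lemma coe_sub_coe_ennreal_le (x : ℝ) (k : ℝ≥0∞) : (x : EReal) - k ≤ x := by
  induction k using ENNReal.recTopCoe with
  | top => simp [EReal.sub_top]
  | coe r =>
    rw [EReal.coe_nnreal_eq_coe_real, ← EReal.coe_sub, EReal.coe_le_coe_iff]
    exact sub_le_self x r.2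

lemma eq_zero_of_coe_sub_coe_ennreal_eq {x : ℝ} {k : ℝ≥0∞} (h : (x : EReal) - k = x) : k = 0 := by
  induction k using ENNReal.recTopCoe with
  | top => simp [EReal.sub_top] at h
  | coe r =>
    rw [EReal.coe_nnreal_eq_coe_real, ← EReal.coe_sub, EReal.coe_eq_coe_iff] at h
    exact_mod_cast (show (r : ℝ) = 0 by linarith)

lemma map_fst_withDensity_prod {α β : Type*} [MeasurableSpace α] [MeasurableSpace β]
    {μ : Measure α} {ν : Measure β} [SFinite μ] [SFinite ν] {g : α × β → ℝ≥0∞}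
    (hg : Measurable g) (h : ∀ x, ∫⁻ y, g (x, y) ∂ν = 1) :
    ((μ.prod ν).withDensity g).map Prod.fst = μ := by
  ext s hs
  rw [Measure.map_apply measurable_fst hs, withDensity_apply _ (measurable_fst hs),
    ← Set.prod_univ, ← Measure.prod_restrict, Measure.restrict_univ,
    lintegral_prod _ hg.aemeasurable]
  simp [h]

lemma map_snd_withDensity_prod {α β : Type*} [MeasurableSpace α] [MeasurableSpace β]
    {μ : Measure α} {ν : Measure β} [SFinite μ] [SFinite ν] {g : α × β → ℝ≥0∞}
    (hg : Measurable g) (h : ∀ y, ∫⁻ x, g (x, y) ∂μ = 1) :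
    ((μ.prod ν).withDensity g).map Prod.snd = ν := by
  ext s hs
  rw [Measure.map_apply measurable_snd hs, withDensity_apply _ (measurable_snd hs),
    ← Set.univ_prod, ← Measure.prod_restrict, Measure.restrict_univ,
    lintegral_prod_symm _ hg.aemeasurable]
  simp [h]

lemma ae_eq_of_withDensity_ofReal_exp_eq {α : Type*} [MeasurableSpace α] {μ : Measure α}
    [SigmaFinite μ] {g g' : α → ℝ} (hg : AEMeasurable g μ) (hg' : AEMeasurable g' μ)
    (h : μ.withDensity (fun x => ENNReal.ofReal (exp (g x)))
      = μ.withDensity (fun x => ENNReal.ofReal (exp (g' x)))) :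
    (fun x => exp (g x)) =ᵐ[μ] fun x => exp (g' x) := by
  have hm (k : α → ℝ) (hk : AEMeasurable k μ) :
      AEMeasurable (fun x => ENNReal.ofReal (exp (k x))) μ :=
    ENNReal.measurable_ofReal.comp_aemeasurable (measurable_exp.comp_aemeasurable hk)
  filter_upwards [(withDensity_eq_iff_of_sigmaFinite (hm g hg) (hm g' hg')).1 h] with x hx
  exact (ENNReal.ofReal_eq_ofReal_iff (exp_pos _).le (exp_pos _).le).1 hx

lemma lintegral_ofReal_exp_eq_one {α : Type*} [MeasurableSpace α] {μ : Measure α} {g : α → ℝ}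
    (hg : Integrable (fun x => exp (g x)) μ) (h : ∫ x, exp (g x) ∂μ = 1) :
    ∫⁻ x, ENNReal.ofReal (exp (g x)) ∂μ = 1 := by
  rw [← ofReal_integral_eq_lintegral_ofReal hg (ae_of_all _ fun x => (exp_pos _).le), h,
    ENNReal.ofReal_one]

section UnitSquare

open unitInterval InformationTheory

instance : IsProbabilityMeasure unif01 := ⟨by simp [unif01, Real.volume_Icc]⟩

instance : IsProbabilityMeasure usq := by unfold usq; infer_instance

lemma ae_mem_unif01 : ∀ᵐ x ∂unif01, x ∈ I := ae_restrict_mem measurableSet_Icc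

lemma usq_mem_MM : usq ∈ MM :=
  ⟨inferInstance, by simp [usq], by simp [usq]⟩

lemma ae_mem_unitSq_of_mem_MM {ν : Measure (ℝ × ℝ)} (hν : ν ∈ MM) : ∀ᵐ p ∂ν, p ∈ unitSq := by
  filter_upwards [ae_of_ae_map measurable_fst.aemeasurable (hν.2.1 ▸ ae_mem_unif01),
    ae_of_ae_map measurable_snd.aemeasurable (hν.2.2 ▸ ae_mem_unif01)] with p h₁ h₂
  exact ⟨h₁, h₂⟩

lemma exists_bcf_eqOn_unitSq {f : ℝ × ℝ → ℝ} (hf : ContinuousOn f unitSq) :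
    ∃ g : ℝ × ℝ →ᵇ ℝ, ∀ p ∈ unitSq, g p = f p := by
  have hc : Continuous fun q : I × I => f (q.1, q.2) :=
    hf.comp_continuous (by fun_prop) fun q => ⟨q.1.2, q.2.2⟩
  refine ⟨(mkOfCompact ⟨_, hc⟩).compContinuous (projUnitInterval.prodMap projUnitInterval), ?_⟩
  rintro ⟨x, y⟩ ⟨hx, hy⟩
  simp [projUnitInterval, Set.projIcc_of_mem _ hx, Set.projIcc_of_mem _ hy]

lemma KL_eq_klDiv (μ ν : Measure (ℝ × ℝ)) [IsProbabilityMeasure μ] [IsProbabilityMeasure ν] :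
    KL μ ν = klDiv μ ν := by
  unfold KL
  split_ifs with h
  · rw [klDiv_of_ac_of_integrable h.1 h.2]
    simp [llr_def]
  · rw [eq_comm, klDiv_eq_top_iff]
    exact fun hac hint => h ⟨hac, hint⟩

def gibbsPotential (ψ : ℝ × ℝ →ᵇ ℝ) (a b : ℝ →ᵇ ℝ) : ℝ × ℝ →ᵇ ℝ :=
  ψ + a.compContinuous .fst + b.compContinuous .snd

variable {ψ : ℝ × ℝ →ᵇ ℝ} {a b : ℝ →ᵇ ℝ}

lemma gibbsPotential_apply (p : ℝ × ℝ) : gibbsPotential ψ a b p = ψ p + a p.1 + b p.2 := rfl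

lemma integral_exp_gibbsPotential_fst (hab : softTransform unif01 ψ b = a) (x : ℝ) :
    ∫ y, exp (gibbsPotential ψ a b (x, y)) ∂unif01 = 1 := by
  subst hab
  exact integral_exp_softTransform b x

lemma integral_exp_gibbsPotential_snd
    (hba : softTransform unif01 (ψ.compContinuous .prodSwap) a = b) (y : ℝ) :
    ∫ x, exp (gibbsPotential ψ a b (x, y)) ∂unif01 = 1 := by
  subst hba
  simpa [gibbsPotential_apply, add_right_comm _ (a _)] using
    integral_exp_softTransform (m := unif01) (ψ := ψ.compContinuous .prodSwap) a y

lemma integral_exp_gibbsPotential (hab : softTransform unif01 ψ b = a) :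
    ∫ p, exp (gibbsPotential ψ a b p) ∂usq = 1 := by
  rw [usq, integral_prod _ (integrable_exp_of_bcf _)]
  simp [integral_exp_gibbsPotential_fst hab]

lemma tilted_gibbsPotential_eq (hab : softTransform unif01 ψ b = a) :
    usq.tilted (gibbsPotential ψ a b)
      = usq.withDensity fun p => ENNReal.ofReal (exp (gibbsPotential ψ a b p)) := by
  simp only [Measure.tilted, integral_exp_gibbsPotential hab, div_one]

lemma tilted_gibbsPotential_mem_MM (hab : softTransform unif01 ψ b = a)
    (hba : softTransform unif01 (ψ.compContinuous .prodSwap) a = b) :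
    usq.tilted (gibbsPotential ψ a b) ∈ MM := by
  have hmeas : Measurable fun p => ENNReal.ofReal (exp (gibbsPotential ψ a b p)) := by fun_prop
  refine ⟨isProbabilityMeasure_tilted (integrable_exp_of_bcf _), ?_, ?_⟩
  · rw [tilted_gibbsPotential_eq hab]
    exact map_fst_withDensity_prod hmeas fun x => lintegral_ofReal_exp_eq_one
      (integrable_exp_of_bcf ((gibbsPotential ψ a b).compContinuous ⟨(x, ·), by fun_prop⟩))
      (integral_exp_gibbsPotential_fst hab x)
  · rw [tilted_gibbsPotential_eq hab]
    exact map_snd_withDensity_prod hmeas fun y => lintegral_ofReal_exp_eq_one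
      (integrable_exp_of_bcf ((gibbsPotential ψ a b).compContinuous ⟨(·, y), by fun_prop⟩))
      (integral_exp_gibbsPotential_snd hba y)

lemma objE_eq_sub_klDiv {f : ℝ × ℝ → ℝ} {θ : ℝ} (hψ : ∀ p ∈ unitSq, ψ p = θ * f p)
    (hab : softTransform unif01 ψ b = a) {ν : Measure (ℝ × ℝ)} (hν : ν ∈ MM) :
    objE f θ ν = ((-(∫ x, a x ∂unif01 + ∫ y, b y ∂unif01) : ℝ) : EReal)
      - klDiv ν (usq.tilted (gibbsPotential ψ a b)) := by
  have := hν.1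
  have hψν : ∫ p, ψ p ∂ν = θ * ∫ p, f p ∂ν := by
    rw [← integral_const_mul]
    exact integral_congr_ae ((ae_mem_unitSq_of_mem_MM hν).mono hψ)
  have hφν : ∫ p, gibbsPotential ψ a b p ∂ν
      = θ * ∫ p, f p ∂ν + (∫ x, a x ∂unif01 + ∫ y, b y ∂unif01) := by
    have ha : Integrable (fun p : ℝ × ℝ => a p.1) ν := (a.compContinuous .fst).integrable ν
    have hb : Integrable (fun p : ℝ × ℝ => b p.2) ν := (b.compContinuous .snd).integrable ν
    have hψa : Integrable (fun p : ℝ × ℝ => ψ p + a p.1) ν := (ψ.integrable ν).add ha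
    simp only [gibbsPotential_apply]
    have ha' : ∫ p, a p.1 ∂ν = ∫ x, a x ∂unif01 := by
      rw [← hν.2.1, integral_map measurable_fst.aemeasurable a.continuous.aestronglyMeasurable]
    have hb' : ∫ p, b p.2 ∂ν = ∫ y, b y ∂unif01 := by
      rw [← hν.2.2, integral_map measurable_snd.aemeasurable b.continuous.aestronglyMeasurable]
    rw [integral_add hψa hb, integral_add (ψ.integrable ν) ha, hψν, ha', hb']
    ring
  rw [objE, KL_eq_klDiv, ← coe_integral_sub_sub_klDiv (integral_exp_gibbsPotential hab)
    ((gibbsPotential ψ a b).integrable ν), hφν, add_sub_cancel_right]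

lemma tilted_gibbsPotential_eq_withDensity {f : ℝ × ℝ → ℝ} {θ : ℝ}
    (hψ : ∀ p ∈ unitSq, ψ p = θ * f p) (hab : softTransform unif01 ψ b = a) :
    usq.tilted (gibbsPotential ψ a b)
      = usq.withDensity fun p => ENNReal.ofReal (exp (θ * f p + a p.1 + b p.2)) := by
  rw [tilted_gibbsPotential_eq hab]
  refine withDensity_congr_ae ((ae_mem_unitSq_of_mem_MM usq_mem_MM).mono fun p hp => ?_)
  simp only [gibbsPotential_apply, hψ p hp]

lemma exp_ae_eq_of_withDensity_eq {f : ℝ × ℝ → ℝ} {θ : ℝ} (hψ : ∀ p ∈ unitSq, ψ p = θ * f p)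
    {a b a' b' : ℝ → ℝ} (ha : AEMeasurable a unif01) (hb : AEMeasurable b unif01)
    (ha' : AEMeasurable a' unif01) (hb' : AEMeasurable b' unif01)
    (h : usq.withDensity (fun p => ENNReal.ofReal (exp (θ * f p + a p.1 + b p.2)))
      = usq.withDensity (fun p => ENNReal.ofReal (exp (θ * f p + a' p.1 + b' p.2)))) :
    (fun p => exp (θ * f p + a p.1 + b p.2)) =ᵐ[usq] fun p => exp (θ * f p + a' p.1 + b' p.2) := by
  have hθf : AEMeasurable (fun p => θ * f p) usq :=
    ψ.continuous.aemeasurable.congr ((ae_mem_unitSq_of_mem_MM usq_mem_MM).mono hψ)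
  exact ae_eq_of_withDensity_ofReal_exp_eq ((hθf.add ha.comp_fst).add hb.comp_snd)
    ((hθf.add ha'.comp_fst).add hb'.comp_snd) h

end UnitSquare

/-- The unique maximizer `μ_{f,θ}` has a density of the form
`exp(θ f(x,y) + a(x) + b(y))` with respect to Lebesgue measure on the unit square, with
`a, b ∈ L¹[0,1]`; the density is unique a.e., and the supremum `Z(f,θ)` equals
`−∫₀¹ (a(x)+b(x)) dx`. -/
theorem maximizer_density_form (f : ℝ × ℝ → ℝ) (hf : memC f) (θ : ℝ)
    (μstar : Measure (ℝ × ℝ)) (hμ : μstar ∈ MM)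
    (hmax : ∀ ν ∈ MM, objE f θ ν ≤ objE f θ μstar) :
    ∃ a b : ℝ → ℝ,
      IntegrableOn a (Set.Icc 0 1) volume ∧ IntegrableOn b (Set.Icc 0 1) volume ∧
      μstar = usq.withDensity
        (fun p => ENNReal.ofReal (Real.exp (θ * f p + a p.1 + b p.2))) ∧
      (∀ a' b' : ℝ → ℝ, IntegrableOn a' (Set.Icc 0 1) volume →
        IntegrableOn b' (Set.Icc 0 1) volume →
        μstar = usq.withDensity
          (fun p => ENNReal.ofReal (Real.exp (θ * f p + a' p.1 + b' p.2))) →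
        (fun p : ℝ × ℝ => Real.exp (θ * f p + a' p.1 + b' p.2))
          =ᵐ[usq] (fun p : ℝ × ℝ => Real.exp (θ * f p + a p.1 + b p.2))) ∧
      (⨆ μ ∈ MM, objE f θ μ) = ((-∫ x in Set.Icc (0 : ℝ) 1, (a x + b x) : ℝ) : EReal) := by
  obtain ⟨g, hg⟩ := exists_bcf_eqOn_unitSq hf.1
  have hψ : ∀ p ∈ unitSq, (θ • g) p = θ * f p := fun p hp => by simp [hg p hp]
  obtain ⟨a, b, hab, hba⟩ := exists_softTransform_eq_and_eq ae_mem_unif01 (θ • g)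
  set c := ∫ x, a x ∂unif01 + ∫ y, b y ∂unif01
  have hG : usq.tilted (gibbsPotential (θ • g) a b) ∈ MM := tilted_gibbsPotential_mem_MM hab hba
  have hle (ν) (hν : ν ∈ MM) : objE f θ ν ≤ ((-c : ℝ) : EReal) :=
    objE_eq_sub_klDiv hψ hab hν ▸ coe_sub_coe_ennreal_le _ _
  have hμG : objE f θ (usq.tilted (gibbsPotential (θ • g) a b)) = ((-c : ℝ) : EReal) := by
    rw [objE_eq_sub_klDiv hψ hab hG, InformationTheory.klDiv_self]
    simp only [EReal.coe_ennreal_zero, sub_zero, c]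
  have hstar : μstar = usq.withDensity
      (fun p => ENNReal.ofReal (Real.exp (θ * f p + a p.1 + b p.2))) := by
    have := hμ.1
    rw [← tilted_gibbsPotential_eq_withDensity hψ hab]
    refine InformationTheory.klDiv_eq_zero_iff.1 (eq_zero_of_coe_sub_coe_ennreal_eq (x := -c) ?_)
    rw [← objE_eq_sub_klDiv hψ hab hμ]
    exact (hle μstar hμ).antisymm (hμG ▸ hmax _ hG)
  refine ⟨a, b, a.integrable _, b.integrable _, hstar, fun a' b' ha' hb' h' => ?_, ?_⟩
  · exact exp_ae_eq_of_withDensity_eq hψ ha'.aemeasurable hb'.aemeasurable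
      a.continuous.aemeasurable b.continuous.aemeasurable (h'.symm.trans hstar)
  · rw [show ∫ x in Set.Icc (0 : ℝ) 1, (a x + b x) = c from
      integral_add (a.integrable _) (b.integrable _)]
    exact le_antisymm (iSup₂_le hle) (hμG ▸ le_iSup₂ (f := fun ν _ => objE f θ ν) _ hG)
end
end

section
/- Let f : [0,1]² → ℝ be continuous, θ ∈ ℝ and k ∈ ℕ. Then the iterative proportional fitting iterates B_m converge entrywise as m → ∞ to a k×k matrix A_{k,θ} belonging to 𝓜_k. -/
open MeasureTheory Filter Topology
open scoped ENNReal

noncomputable section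

/-- `𝓜_k`: `k×k` matrices with nonnegative entries and all row and column sums `1/k`. -/
def Mk (k : ℕ) : Set (Matrix (Fin k) (Fin k) ℝ) :=
  {A | (∀ r s, 0 ≤ A r s) ∧ (∀ r, ∑ s, A r s = 1 / k) ∧ (∀ s, ∑ r, A r s = 1 / k)}

/-- The iterative proportional fitting iterates `B_m`, starting from
`B_0(r,s) = exp(θ f(r/k, s/k))`: odd steps normalize rows, even steps normalize columns. -/
def ipfp (f : ℝ × ℝ → ℝ) (θ : ℝ) (k : ℕ) : ℕ → Matrix (Fin k) (Fin k) ℝ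
  | 0 => Matrix.of fun r s => Real.exp (θ * f ((r.1 + 1 : ℝ) / k, (s.1 + 1 : ℝ) / k))
  | m + 1 =>
    if Even m then
      Matrix.of fun r s => ipfp f θ k m r s / (k * ∑ l, ipfp f θ k m r l)
    else
      Matrix.of fun r s => ipfp f θ k m r s / (k * ∑ l, ipfp f θ k m l s)

/-- The discrete objective `θ ∑ f(r/k,s/k) A(r,s) − 2 log k − ∑ A(r,s) log A(r,s)`
(with the convention `0 log 0 = 0`, which holds for `Real.log`). -/
def objk (f : ℝ × ℝ → ℝ) (θ : ℝ) (k : ℕ) (A : Matrix (Fin k) (Fin k) ℝ) : ℝ :=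
  θ * ∑ r, ∑ s, f ((r.1 + 1 : ℝ) / k, (s.1 + 1 : ℝ) / k) * A r s
    - 2 * Real.log k - ∑ r, ∑ s, A r s * Real.log (A r s)

/-- `W_k(f,θ)`, the supremum of the discrete objective over `𝓜_k`. -/
def Wk (f : ℝ × ℝ → ℝ) (k : ℕ) (θ : ℝ) : ℝ := sSup (objk f θ k '' Mk k)

/-!
The iteration is Sinkhorn's algorithm for the positive matrix `B₀`. Each step multiplies rows or
columns by positive factors, so every iterate has the cross ratios
`B(r,s) B(r',s') / (B(r,s') B(r',s))` of `B₀`, a closed condition. The potential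
`∑ i, log B_m(i,i)` changes by `-∑ i, log cᵢ` where the normalizing factors `cᵢ` have mean one,
so by AM-GM it increases; it is bounded above, hence its increments tend to zero, and with them
(AM-GM again) the deviations of the row and column sums from `1/k`. So every cluster point `S`
has uniform marginals and the cross ratios of `B₀`; its diagonal is bounded below through the
potential, hence all its entries are positive through the cross ratios. Such an `S` is unique,
because for two of them `log S - log S'` is of the form `a r + b s` and so
`∑ (S - S') (log S - log S') = 0`. By compactness, the iterates converge.
-/

open Finset Real

namespace Real

lemma sq_sqrt_sub_one_le_neg_sum_log {ι : Type*} [Fintype ι] {a : ι → ℝ} (ha : ∀ i, 0 < a i)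
    (hsum : ∑ i, a i = Fintype.card ι) (j : ι) : (√(a j) - 1) ^ 2 ≤ -∑ i, log (a i) := by
  have hgap : ∀ i, 0 ≤ a i - 1 - log (a i) := fun i => by
    linarith [log_le_sub_one_of_pos (ha i)]
  -- `log (a j) = 2 log √(a j) ≤ 2 (√(a j) - 1)`
  have hsqrt : (√(a j) - 1) ^ 2 ≤ a j - 1 - log (a j) := by
    have h := log_le_sub_one_of_pos (sqrt_pos.2 (ha j))
    rw [log_sqrt (ha j).le] at h
    nlinarith [sq_sqrt (ha j).le]
  calc (√(a j) - 1) ^ 2 ≤ a j - 1 - log (a j) := hsqrt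
    _ ≤ ∑ i, (a i - 1 - log (a i)) := single_le_sum (fun i _ => hgap i) (mem_univ j)
    _ = -∑ i, log (a i) := by simp [sum_sub_distrib, hsum]

lemma sub_mul_log_sub_log_nonneg {x y : ℝ} (hx : 0 < x) (hy : 0 < y) :
    0 ≤ (x - y) * (log x - log y) := by
  rcases le_total x y with h | h
  · exact mul_nonneg_of_nonpos_of_nonpos (by linarith) (by linarith [log_le_log hx h])
  · exact mul_nonneg (by linarith) (by linarith [log_le_log hy h])

lemma sub_mul_log_sub_log_pos {x y : ℝ} (hx : 0 < x) (hy : 0 < y) (hxy : x ≠ y) :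
    0 < (x - y) * (log x - log y) := by
  rcases hxy.lt_or_gt with h | h
  · exact mul_pos_of_neg_of_neg (by linarith) (by linarith [log_lt_log hx h])
  · exact mul_pos (by linarith) (by linarith [log_lt_log hy h])

lemma tendsto_one_of_sq_sqrt_sub_one_le {c δ : ℕ → ℝ} (hc : ∀ m, 0 ≤ c m)
    (hδ : Tendsto δ atTop (𝓝 0)) (h : ∀ m, (√(c m) - 1) ^ 2 ≤ δ m) :
    Tendsto c atTop (𝓝 1) := by
  have hsq : Tendsto (fun m => (√(c m) - 1) ^ 2) atTop (𝓝 0) :=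
    squeeze_zero (fun m => sq_nonneg _) h hδ
  have hsqrt : Tendsto (fun m => √(c m) - 1) atTop (𝓝 0) := by
    rw [tendsto_zero_iff_abs_tendsto_zero]
    simpa [Function.comp_def, sqrt_sq_eq_abs] using hsq.sqrt
  simpa [sq_sqrt (hc _)] using (tendsto_sub_nhds_zero_iff.1 hsqrt).pow 2

end Real

lemma MapClusterPt.eq_of_tendsto {α X : Type*} [TopologicalSpace X] [T2Space X] {F : Filter α}
    {u : α → X} {x y : X} (hx : MapClusterPt x F u) (hu : Tendsto u F (𝓝 y)) : x = y :=
  eq_of_nhds_neBot (hx.clusterPt.mono hu)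

namespace Matrix

section CrossRatios

variable {ι κ : Type*}

/-- The cross ratios `A r s * A r' s' / (A r s' * A r' s)` of `A` and `B` agree; written without
division, so that the condition is closed in `A`. -/
def SameCrossRatios (A B : Matrix ι κ ℝ) : Prop :=
  ∀ r r' s s', A r s * A r' s' * (B r s' * B r' s) = A r s' * A r' s * (B r s * B r' s')

lemma sameCrossRatios_refl (A : Matrix ι κ ℝ) : SameCrossRatios A A :=
  fun _ _ _ _ => by ring

lemma isClosed_setOf_sameCrossRatios (B : Matrix ι κ ℝ) :
    IsClosed {A : Matrix ι κ ℝ | SameCrossRatios A B} := by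
  simp only [SameCrossRatios, Set.ofPred_forall]
  refine isClosed_iInter fun r => isClosed_iInter fun r' => isClosed_iInter fun s =>
    isClosed_iInter fun s' => isClosed_eq ?_ ?_ <;>
  fun_prop

lemma SameCrossRatios.exists_log_eq_add [Nonempty ι] [Nonempty κ] {A B : Matrix ι κ ℝ}
    (h : SameCrossRatios A B) (hA : ∀ r s, 0 < A r s) (hB : ∀ r s, 0 < B r s) :
    ∃ (a : ι → ℝ) (b : κ → ℝ), ∀ r s, log (A r s) = log (B r s) + a r + b s := by
  obtain ⟨r₀⟩ := ‹Nonempty ι›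
  obtain ⟨s₀⟩ := ‹Nonempty κ›
  refine ⟨fun r => log (A r s₀) - log (B r s₀),
    fun s => log (A r₀ s) - log (B r₀ s) - (log (A r₀ s₀) - log (B r₀ s₀)), fun r s => ?_⟩
  have hA₀ : ∀ r s, A r s ≠ 0 := fun r s => (hA r s).ne'
  have hB₀ : ∀ r s, B r s ≠ 0 := fun r s => (hB r s).ne'
  have hlog := congrArg log (h r r₀ s s₀)
  simp only [log_mul, hA₀, hB₀, mul_ne_zero_iff, ne_eq, not_false_eq_true, and_self] at hlog
  linarith

lemma SameCrossRatios.pos_of_diag_pos {A B : Matrix ι ι ℝ} (h : SameCrossRatios A B)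
    (hB : ∀ r s, 0 < B r s) (hA : ∀ r s, 0 ≤ A r s) (hdiag : ∀ i, 0 < A i i) (r s : ι) :
    0 < A r s := by
  have hrs := h r s s r
  have hpos : 0 < A r r * A s s * (B r s * B s r) :=
    mul_pos (mul_pos (hdiag r) (hdiag s)) (mul_pos (hB r s) (hB s r))
  refine (hA r s).lt_of_ne fun h0 => ?_
  rw [← h0, zero_mul, zero_mul] at hrs
  linarith

variable [Fintype ι] [Fintype κ]

/-- The logarithm of `A / A'` has the form `a r + b s`, so it pairs to zero with `A - A'`;
but `(x - y) (log x - log y) > 0` for `x ≠ y`. -/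
lemma SameCrossRatios.eq_of_sum_eq [Nonempty ι] [Nonempty κ] {A A' B : Matrix ι κ ℝ}
    (h : SameCrossRatios A B) (h' : SameCrossRatios A' B) (hA : ∀ r s, 0 < A r s)
    (hA' : ∀ r s, 0 < A' r s) (hB : ∀ r s, 0 < B r s)
    (hrow : ∀ r, ∑ s, A r s = ∑ s, A' r s) (hcol : ∀ s, ∑ r, A r s = ∑ r, A' r s) :
    A = A' := by
  obtain ⟨a, b, hab⟩ := h.exists_log_eq_add hA hB
  obtain ⟨a', b', hab'⟩ := h'.exists_log_eq_add hA' hB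
  have hsep : ∀ r s, log (A r s) - log (A' r s) = (a r - a' r) + (b s - b' s) := fun r s => by
    rw [hab, hab']; ring
  have hrow₀ : ∑ r, ∑ s, (A r s - A' r s) * (a r - a' r) = 0 := by
    simp [← sum_mul, sum_sub_distrib, hrow]
  have hcol₀ : ∑ r, ∑ s, (A r s - A' r s) * (b s - b' s) = 0 := by
    rw [sum_comm]
    simp [← sum_mul, sum_sub_distrib, hcol]
  have hsum : ∑ r, ∑ s, (A r s - A' r s) * (log (A r s) - log (A' r s)) = 0 := by
    simp only [hsep, mul_add, sum_add_distrib, hrow₀, hcol₀, add_zero]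
  have hnonneg : ∀ r s, 0 ≤ (A r s - A' r s) * (log (A r s) - log (A' r s)) :=
    fun r s => sub_mul_log_sub_log_nonneg (hA r s) (hA' r s)
  ext r s
  by_contra hne
  have hzero := (sum_eq_zero_iff_of_nonneg fun r _ => sum_nonneg fun s _ => hnonneg r s).1 hsum r
    (mem_univ r)
  exact (sub_mul_log_sub_log_pos (hA r s) (hA' r s) hne).ne'
    ((sum_eq_zero_iff_of_nonneg fun s _ => hnonneg r s).1 hzero s (mem_univ s))

end CrossRatios

section Normalize

variable {ι : Type*} [Fintype ι] {B : Matrix ι ι ℝ}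

def rowNormalize (B : Matrix ι ι ℝ) : Matrix ι ι ℝ :=
  of fun r s => B r s / (Fintype.card ι * ∑ l, B r l)

-- `colNormalize B = (rowNormalize Bᵀ)ᵀ` holds by `rfl`; the column lemmas below are the row
-- lemmas applied to `Bᵀ`.
def colNormalize (B : Matrix ι ι ℝ) : Matrix ι ι ℝ :=
  of fun r s => B r s / (Fintype.card ι * ∑ l, B l s)

/-- The potential of the Sinkhorn iteration: both normalizations divide `B i i` by a factor indexed
by `i`, and these factors have mean one. -/
def logDiagProd (B : Matrix ι ι ℝ) : ℝ := ∑ i, log (B i i)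

lemma card_mul_sum_row_pos (hB : ∀ r s, 0 < B r s) (r : ι) :
    0 < (Fintype.card ι : ℝ) * ∑ s, B r s :=
  mul_pos (Nat.cast_pos.2 (Fintype.card_pos_iff.2 ⟨r⟩))
    (sum_pos (fun s _ => hB r s) ⟨r, mem_univ r⟩)

lemma rowNormalize_pos (hB : ∀ r s, 0 < B r s) (r s : ι) : 0 < rowNormalize B r s :=
  div_pos (hB r s) (card_mul_sum_row_pos hB r)

lemma colNormalize_pos (hB : ∀ r s, 0 < B r s) (r s : ι) : 0 < colNormalize B r s :=
  rowNormalize_pos (B := Bᵀ) (fun r s => hB s r) s r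

lemma sum_rowNormalize_apply (hB : ∀ r s, 0 < B r s) (r : ι) :
    ∑ s, rowNormalize B r s = 1 / Fintype.card ι := by
  have hsum : (∑ s, B r s) ≠ 0 := (sum_pos (fun s _ => hB r s) ⟨r, mem_univ r⟩).ne'
  simp only [rowNormalize, of_apply, ← sum_div]
  rw [mul_comm, ← div_div, div_self hsum]

lemma sum_colNormalize_apply (hB : ∀ r s, 0 < B r s) (s : ι) :
    ∑ r, colNormalize B r s = 1 / Fintype.card ι :=
  sum_rowNormalize_apply (B := Bᵀ) (fun r s => hB s r) s

lemma SameCrossRatios.rowNormalize {A : Matrix ι ι ℝ} (h : SameCrossRatios B A) :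
    SameCrossRatios (rowNormalize B) A := fun r r' s s' => by
  simp only [Matrix.rowNormalize, of_apply, div_eq_mul_inv]
  linear_combination (Fintype.card ι * ∑ l, B r l)⁻¹ * (Fintype.card ι * ∑ l, B r' l)⁻¹ *
    h r r' s s'

lemma SameCrossRatios.colNormalize {A : Matrix ι ι ℝ} (h : SameCrossRatios B A) :
    SameCrossRatios (colNormalize B) A := fun r r' s s' => by
  simp only [Matrix.colNormalize, of_apply, div_eq_mul_inv]
  linear_combination (Fintype.card ι * ∑ l, B l s)⁻¹ * (Fintype.card ι * ∑ l, B l s')⁻¹ *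
    h r r' s s'

lemma logDiagProd_rowNormalize (hB : ∀ r s, 0 < B r s) :
    logDiagProd (rowNormalize B) = logDiagProd B - ∑ i, log (Fintype.card ι * ∑ s, B i s) := by
  simp only [logDiagProd, rowNormalize, of_apply, ← sum_sub_distrib]
  exact sum_congr rfl fun i _ => log_div (hB i i).ne' (card_mul_sum_row_pos hB i).ne'

lemma sq_sqrt_sub_one_le_logDiagProd_rowNormalize_sub (hB : ∀ r s, 0 < B r s)
    (htot : ∑ r, ∑ s, B r s = 1) (j : ι) :
    (√(Fintype.card ι * ∑ s, B j s) - 1) ^ 2 ≤ logDiagProd (rowNormalize B) - logDiagProd B := by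
  rw [logDiagProd_rowNormalize hB, sub_sub_cancel_left]
  exact sq_sqrt_sub_one_le_neg_sum_log (card_mul_sum_row_pos hB)
    (by rw [← mul_sum, htot, mul_one]) j

lemma sq_sqrt_sub_one_le_logDiagProd_colNormalize_sub (hB : ∀ r s, 0 < B r s)
    (htot : ∑ r, ∑ s, B r s = 1) (j : ι) :
    (√(Fintype.card ι * ∑ r, B r j) - 1) ^ 2 ≤ logDiagProd (colNormalize B) - logDiagProd B :=
  sq_sqrt_sub_one_le_logDiagProd_rowNormalize_sub (B := Bᵀ) (fun r s => hB s r)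
    (by simp only [transpose_apply]; rwa [sum_comm]) j

end Normalize

section Sinkhorn

variable {ι : Type*} [Fintype ι] {A : Matrix ι ι ℝ}

def sinkhorn (A : Matrix ι ι ℝ) : ℕ → Matrix ι ι ℝ
  | 0 => A
  | m + 1 => if Even m then rowNormalize (sinkhorn A m) else colNormalize (sinkhorn A m)

-- equivalently, `S = D₁ * A * D₂` with positive diagonal `D₁`, `D₂`
structure IsSinkhornScaling (A S : Matrix ι ι ℝ) : Prop where
  pos : ∀ r s, 0 < S r s
  sum_row : ∀ r, ∑ s, S r s = 1 / Fintype.card ι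
  sum_col : ∀ s, ∑ r, S r s = 1 / Fintype.card ι
  sameCrossRatios : SameCrossRatios S A

lemma sinkhorn_succ_of_even {m : ℕ} (hm : Even m) :
    sinkhorn A (m + 1) = rowNormalize (sinkhorn A m) :=
  if_pos hm

lemma sinkhorn_succ_of_not_even {m : ℕ} (hm : ¬Even m) :
    sinkhorn A (m + 1) = colNormalize (sinkhorn A m) :=
  if_neg hm

lemma sinkhorn_pos (hA : ∀ r s, 0 < A r s) (m : ℕ) (r s : ι) : 0 < sinkhorn A m r s := by
  induction m generalizing r s with
  | zero => exact hA r s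
  | succ m ih =>
    by_cases hm : Even m
    · rw [sinkhorn_succ_of_even hm]; exact rowNormalize_pos ih r s
    · rw [sinkhorn_succ_of_not_even hm]; exact colNormalize_pos ih r s

lemma sameCrossRatios_sinkhorn (m : ℕ) : SameCrossRatios (sinkhorn A m) A := by
  induction m with
  | zero => exact sameCrossRatios_refl A
  | succ m ih =>
    by_cases hm : Even m
    · rw [sinkhorn_succ_of_even hm]; exact ih.rowNormalize
    · rw [sinkhorn_succ_of_not_even hm]; exact ih.colNormalize

lemma sum_sinkhorn_succ_apply_of_even (hA : ∀ r s, 0 < A r s) {m : ℕ} (hm : Even m) (r : ι) :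
    ∑ s, sinkhorn A (m + 1) r s = 1 / Fintype.card ι := by
  rw [sinkhorn_succ_of_even hm]
  exact sum_rowNormalize_apply (sinkhorn_pos hA m) r

lemma sum_sinkhorn_succ_apply_of_not_even (hA : ∀ r s, 0 < A r s) {m : ℕ} (hm : ¬Even m)
    (s : ι) : ∑ r, sinkhorn A (m + 1) r s = 1 / Fintype.card ι := by
  rw [sinkhorn_succ_of_not_even hm]
  exact sum_colNormalize_apply (sinkhorn_pos hA m) s

variable [Nonempty ι]

lemma sum_sum_sinkhorn_succ (hA : ∀ r s, 0 < A r s) (m : ℕ) :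
    ∑ r, ∑ s, sinkhorn A (m + 1) r s = 1 := by
  have hn : (Fintype.card ι : ℝ) ≠ 0 := Nat.cast_ne_zero.2 Fintype.card_ne_zero
  by_cases hm : Even m
  · simp [sum_sinkhorn_succ_apply_of_even hA hm, hn]
  · rw [sum_comm (f := fun r s => sinkhorn A (m + 1) r s)]
    simp [sum_sinkhorn_succ_apply_of_not_even hA hm, hn]

lemma sinkhorn_succ_le_one (hA : ∀ r s, 0 < A r s) (m : ℕ) (r s : ι) :
    sinkhorn A (m + 1) r s ≤ 1 := by
  have hpos := sinkhorn_pos hA (m + 1)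
  calc sinkhorn A (m + 1) r s ≤ ∑ s', sinkhorn A (m + 1) r s' :=
        single_le_sum (fun s' _ => (hpos r s').le) (mem_univ s)
    _ ≤ ∑ r', ∑ s', sinkhorn A (m + 1) r' s' :=
        single_le_sum (f := fun r' => ∑ s', sinkhorn A (m + 1) r' s')
          (fun r' _ => sum_nonneg fun s' _ => (hpos r' s').le) (mem_univ r)
    _ = 1 := sum_sum_sinkhorn_succ hA m

lemma logDiagProd_sinkhorn_succ_nonpos (hA : ∀ r s, 0 < A r s) (m : ℕ) :
    logDiagProd (sinkhorn A (m + 1)) ≤ 0 :=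
  sum_nonpos fun i _ => log_nonpos (sinkhorn_pos hA _ i i).le (sinkhorn_succ_le_one hA m i i)

/-- The lines about to be normalized are handled by AM-GM; the others already sum to
`1 / card ι`. -/
lemma sq_sqrt_sub_one_le_logDiagProd_sinkhorn_sub (hA : ∀ r s, 0 < A r s) (m : ℕ) (j : ι) :
    (√(Fintype.card ι * ∑ s, sinkhorn A (m + 1) j s) - 1) ^ 2 ≤
        logDiagProd (sinkhorn A (m + 2)) - logDiagProd (sinkhorn A (m + 1)) ∧
      (√(Fintype.card ι * ∑ r, sinkhorn A (m + 1) r j) - 1) ^ 2 ≤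
        logDiagProd (sinkhorn A (m + 2)) - logDiagProd (sinkhorn A (m + 1)) := by
  have hpos := sinkhorn_pos hA (m + 1)
  have htot := sum_sum_sinkhorn_succ hA m
  have hexact : (√(Fintype.card ι * (1 / Fintype.card ι)) - 1) ^ 2 = 0 := by
    simp [Fintype.card_ne_zero]
  by_cases hm : Even m
  · have hcol := sq_sqrt_sub_one_le_logDiagProd_colNormalize_sub hpos htot j
    rw [← sinkhorn_succ_of_not_even (Nat.not_even_iff_odd.2 hm.add_one)] at hcol
    refine ⟨?_, hcol⟩
    rw [sum_sinkhorn_succ_apply_of_even hA hm, hexact]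
    exact (sq_nonneg _).trans hcol
  · have hrow := sq_sqrt_sub_one_le_logDiagProd_rowNormalize_sub hpos htot j
    rw [← sinkhorn_succ_of_even (Nat.even_add_one.2 hm)] at hrow
    refine ⟨hrow, ?_⟩
    rw [sum_sinkhorn_succ_apply_of_not_even hA hm, hexact]
    exact (sq_nonneg _).trans hrow

lemma monotone_logDiagProd_sinkhorn_succ (hA : ∀ r s, 0 < A r s) :
    Monotone fun m => logDiagProd (sinkhorn A (m + 1)) :=
  monotone_nat_of_le_succ fun m => sub_nonneg.1 <| (sq_nonneg _).trans
    (sq_sqrt_sub_one_le_logDiagProd_sinkhorn_sub hA m (Classical.arbitrary ι)).1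

lemma tendsto_logDiagProd_sinkhorn_sub (hA : ∀ r s, 0 < A r s) :
    Tendsto (fun m => logDiagProd (sinkhorn A (m + 2)) - logDiagProd (sinkhorn A (m + 1)))
      atTop (𝓝 0) := by
  have hlim := tendsto_atTop_ciSup (monotone_logDiagProd_sinkhorn_succ hA)
    ⟨0, Set.forall_mem_range.2 (logDiagProd_sinkhorn_succ_nonpos hA)⟩
  simpa using (hlim.comp (tendsto_add_atTop_nat 1)).sub hlim

lemma tendsto_sum_sinkhorn_apply_row (hA : ∀ r s, 0 < A r s) (r : ι) :
    Tendsto (fun m => ∑ s, sinkhorn A m r s) atTop (𝓝 (1 / Fintype.card ι)) := by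
  have hfactor := tendsto_one_of_sq_sqrt_sub_one_le
    (fun m => (card_mul_sum_row_pos (sinkhorn_pos hA (m + 1)) r).le)
    (tendsto_logDiagProd_sinkhorn_sub hA)
    (fun m => (sq_sqrt_sub_one_le_logDiagProd_sinkhorn_sub hA m r).1)
  rw [← tendsto_add_atTop_iff_nat 1]
  simpa [Fintype.card_ne_zero] using hfactor.div_const (Fintype.card ι : ℝ)

lemma tendsto_sum_sinkhorn_apply_col (hA : ∀ r s, 0 < A r s) (s : ι) :
    Tendsto (fun m => ∑ r, sinkhorn A m r s) atTop (𝓝 (1 / Fintype.card ι)) := by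
  have hfactor := tendsto_one_of_sq_sqrt_sub_one_le
    (fun m => (card_mul_sum_row_pos (B := (sinkhorn A (m + 1))ᵀ)
      (fun r s => sinkhorn_pos hA (m + 1) s r) s).le)
    (tendsto_logDiagProd_sinkhorn_sub hA)
    (fun m => (sq_sqrt_sub_one_le_logDiagProd_sinkhorn_sub hA m s).2)
  rw [← tendsto_add_atTop_iff_nat 1]
  simpa [Fintype.card_ne_zero] using hfactor.div_const (Fintype.card ι : ℝ)

lemma exp_logDiagProd_sinkhorn_one_le (hA : ∀ r s, 0 < A r s) {m : ℕ} (hm : 1 ≤ m) (i : ι) :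
    exp (logDiagProd (sinkhorn A 1)) ≤ sinkhorn A m i i := by
  obtain ⟨m, rfl⟩ := Nat.exists_eq_add_of_le' hm
  have hpos := sinkhorn_pos hA (m + 1)
  have hmono : logDiagProd (sinkhorn A 1) ≤ logDiagProd (sinkhorn A (m + 1)) :=
    monotone_logDiagProd_sinkhorn_succ hA (Nat.zero_le m)
  have hle : logDiagProd (sinkhorn A (m + 1)) ≤ log (sinkhorn A (m + 1) i i) := by
    simpa only [logDiagProd, sum_neg_distrib, neg_le_neg_iff] using
      single_le_sum (f := fun j => -log (sinkhorn A (m + 1) j j))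
        (fun j _ => neg_nonneg.2 (log_nonpos (hpos j j).le (sinkhorn_succ_le_one hA m j j)))
        (mem_univ i)
  rw [← exp_log (hpos i i)]
  exact exp_le_exp.2 (hmono.trans hle)

lemma IsSinkhornScaling.unique {S S' : Matrix ι ι ℝ} (hA : ∀ r s, 0 < A r s)
    (hS : IsSinkhornScaling A S) (hS' : IsSinkhornScaling A S') : S = S' :=
  hS.sameCrossRatios.eq_of_sum_eq hS'.sameCrossRatios hS.pos hS'.pos hA
    (fun r => by rw [hS.sum_row, hS'.sum_row]) (fun s => by rw [hS.sum_col, hS'.sum_col])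

lemma isSinkhornScaling_of_mapClusterPt (hA : ∀ r s, 0 < A r s) {S : Matrix ι ι ℝ}
    (hS : MapClusterPt S atTop (sinkhorn A)) : IsSinkhornScaling A S := by
  have hnonneg : ∀ r s, 0 ≤ S r s := fun r s =>
    (isClosed_le continuous_const (continuous_id.matrix_elem r s)).mem_of_mapClusterPt hS
      (Eventually.of_forall fun m => (sinkhorn_pos hA m r s).le)
  have hdiag : ∀ i, exp (logDiagProd (sinkhorn A 1)) ≤ S i i := fun i =>
    (isClosed_le continuous_const (continuous_id.matrix_elem i i)).mem_of_mapClusterPt hS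
      (eventually_atTop.2 ⟨1, fun m hm => exp_logDiagProd_sinkhorn_one_le hA hm i⟩)
  have hcross : SameCrossRatios S A :=
    (isClosed_setOf_sameCrossRatios A).mem_of_mapClusterPt hS
      (Eventually.of_forall sameCrossRatios_sinkhorn)
  refine ⟨hcross.pos_of_diag_pos hA hnonneg fun i => (exp_pos _).trans_le (hdiag i),
    fun r => ?_, fun s => ?_, hcross⟩
  · have hcont : Continuous fun M : Matrix ι ι ℝ => ∑ s, M r s :=
      continuous_finsetSum _ fun s _ => continuous_id.matrix_elem r s
    exact (hS.tendsto_comp (hcont.tendsto S)).eq_of_tendsto (tendsto_sum_sinkhorn_apply_row hA r)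
  · have hcont : Continuous fun M : Matrix ι ι ℝ => ∑ r, M r s :=
      continuous_finsetSum _ fun r _ => continuous_id.matrix_elem r s
    exact (hS.tendsto_comp (hcont.tendsto S)).eq_of_tendsto (tendsto_sum_sinkhorn_apply_col hA s)

theorem tendsto_sinkhorn (hA : ∀ r s, 0 < A r s) :
    ∃ S, IsSinkhornScaling A S ∧ Tendsto (sinkhorn A) atTop (𝓝 S) := by
  set K : Set (Matrix ι ι ℝ) := Set.univ.pi fun _ => Set.univ.pi fun _ => Set.Icc 0 1
  have hK : IsCompact K := isCompact_univ_pi fun _ => isCompact_univ_pi fun _ => isCompact_Icc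
  have hmem : ∀ᶠ m in atTop, sinkhorn A m ∈ K := eventually_atTop.2 ⟨1, fun m hm => by
    obtain ⟨m, rfl⟩ := Nat.exists_eq_add_of_le' hm
    exact fun r _ s _ => ⟨(sinkhorn_pos hA _ r s).le, sinkhorn_succ_le_one hA m r s⟩⟩
  obtain ⟨S, -, hS⟩ := hK.exists_mapClusterPt (le_principal_iff.2 hmem)
  have hlimit := isSinkhornScaling_of_mapClusterPt hA hS
  exact ⟨S, hlimit, hK.tendsto_nhds_of_unique_mapClusterPt hmem fun S' _ hS' =>
    (isSinkhornScaling_of_mapClusterPt hA hS').unique hA hlimit⟩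

end Sinkhorn

end Matrix

lemma ipfp_eq_sinkhorn (f : ℝ × ℝ → ℝ) (θ : ℝ) (k m : ℕ) :
    ipfp f θ k m = Matrix.sinkhorn (ipfp f θ k 0) m := by
  induction m with
  | zero => rfl
  | succ m ih =>
    by_cases hm : Even m
    · rw [Matrix.sinkhorn_succ_of_even hm, ← ih]
      ext r s
      simp [ipfp, hm, Matrix.rowNormalize]
    · rw [Matrix.sinkhorn_succ_of_not_even hm, ← ih]
      ext r s
      simp [ipfp, hm, Matrix.colNormalize]

theorem ipfp_converges_general (f : ℝ × ℝ → ℝ) (θ : ℝ) (k : ℕ) :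
    ∃ A ∈ Mk k, ∀ r s : Fin k, Tendsto (fun m : ℕ => ipfp f θ k m r s) atTop (𝓝 (A r s)) := by
  rcases k.eq_zero_or_pos with rfl | hk
  · exact ⟨0, ⟨fun r => r.elim0, fun r => r.elim0, fun s => s.elim0⟩, fun r => r.elim0⟩
  have : Nonempty (Fin k) := Fin.pos_iff_nonempty.1 hk
  obtain ⟨S, hS, hlim⟩ := Matrix.tendsto_sinkhorn (A := ipfp f θ k 0) fun r s => exp_pos _
  refine ⟨S, ⟨fun r s => (hS.pos r s).le, by simpa using hS.sum_row, by simpa using hS.sum_col⟩,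
    fun r s => ?_⟩
  simpa only [← ipfp_eq_sinkhorn] using tendsto_pi_nhds.1 (tendsto_pi_nhds.1 hlim r) s

/-- The IPFP iterates converge entrywise to a matrix in `𝓜_k`. -/
theorem ipfp_converges (f : ℝ × ℝ → ℝ) (hf : ContinuousOn f unitSq) (θ : ℝ)
    (k : ℕ) (hk : 0 < k) :
    ∃ A ∈ Mk k, ∀ r s : Fin k, Tendsto (fun m : ℕ => ipfp f θ k m r s) atTop (𝓝 (A r s)) :=
  ipfp_converges_general f θ k
end
end

section
/- Let f : [0,1]² → ℝ be continuous and k ∈ ℕ. Then the function θ ↦ W_k(f,θ) is convex and differentiable on ℝ, with derivative W_k'(f,θ) = ∑_{r,s=1}^k A_{k,θ}(r,s) f(r/k, s/k), where A_{k,θ} ∈ 𝓜_k is the unique maximizer in the definition of W_k(f,θ). -/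
open MeasureTheory Filter Topology
open scoped ENNReal

noncomputable section

open Real Set Finset

/-!
`W_k(f, θ)` is the maximum over `𝓜_k` of functions affine in `θ`, the one indexed by `B` having
slope `∑ f(r/k, s/k) B(r,s)`; hence it is convex, and the slope of the maximizer `A_{k,θ}` is a
subgradient at `θ`. Since `x ↦ x log x` is `k`-strongly convex on `[0, 1/k]`, which contains every
entry of a matrix in `𝓜_k`, the objective is strongly concave on `𝓜_k`. Comparing the
maximizers at `θ` and `θ'` through this strong concavity and Cauchy–Schwarz shows that the
subgradient is Lipschitz in `θ`, and a convex function with a continuous choice of subgradients is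
differentiable, with that derivative.
-/

theorem convexOn_univ_of_forall_add_mul_sub_le {F g : ℝ → ℝ}
    (hsub : ∀ x y, F x + (y - x) * g x ≤ F y) : ConvexOn ℝ univ F := by
  refine ⟨convex_univ, fun x _ y _ a b ha hb hab => ?_⟩
  set z := a • x + b • y
  have hx := mul_le_mul_of_nonneg_left (hsub z x) ha
  have hy := mul_le_mul_of_nonneg_left (hsub z y) hb
  simp only [z, smul_eq_mul] at hx hy ⊢
  linear_combination hx + hy + ((a * x + b * y) * g (a * x + b * y) - F (a * x + b * y)) * hab

theorem hasDerivAt_of_forall_add_mul_sub_le {F g : ℝ → ℝ} {x : ℝ}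
    (hsub : ∀ x y, F x + (y - x) * g x ≤ F y) (hg : ContinuousAt g x) :
    HasDerivAt F (g x) x := by
  rw [hasDerivAt_iff_isLittleO, Asymptotics.isLittleO_iff]
  intro c hc
  filter_upwards [hg.eventually (Metric.closedBall_mem_nhds (g x) hc)] with y hy
  have hlow := hsub x y
  have hup := hsub y x
  rw [Real.dist_eq] at hy
  simp only [smul_eq_mul, Real.norm_eq_abs]
  calc |F y - F x - (y - x) * g x| ≤ |(y - x) * (g y - g x)| := by
        rw [abs_of_nonneg (by linarith)]
        exact le_abs.2 (Or.inl (by linarith))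
    _ = |g y - g x| * |y - x| := by rw [abs_mul, mul_comm]
    _ ≤ c * |y - x| := by gcongr

theorem strongConvexOn_mul_log (c : ℝ) :
    StrongConvexOn (Icc 0 c) c⁻¹ fun x : ℝ => x * log x := by
  simp only [strongConvexOn_iff_convex, Real.norm_eq_abs, sq_abs]
  refine convexOn_of_hasDerivWithinAt2_nonneg (convex_Icc 0 c)
    (f' := fun x => log x + 1 - c⁻¹ * x) (f'' := fun x => x⁻¹ - c⁻¹) (by fun_prop) ?_ ?_ ?_
    <;> intro x hx <;> rw [interior_Icc] at *
  · refine ((Real.hasDerivAt_mul_log hx.1.ne').sub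
      ((hasDerivAt_pow 2 x).const_mul (c⁻¹ / 2))).hasDerivWithinAt.congr_deriv ?_
    ring
  · exact (((Real.hasDerivAt_log hx.1.ne').add_const 1).sub
      ((hasDerivAt_id x).const_mul c⁻¹)).hasDerivWithinAt.congr_deriv (by simp)
  · exact sub_nonneg.2 (inv_anti₀ hx.1 hx.2.le)

def gridPairing (f : ℝ × ℝ → ℝ) (k : ℕ) : Matrix (Fin k) (Fin k) ℝ →ₗ[ℝ] ℝ where
  toFun B := ∑ r, ∑ s, f ((r.1 + 1 : ℝ) / k, (s.1 + 1 : ℝ) / k) * B r s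
  map_add' B C := by simp only [Matrix.add_apply, mul_add, sum_add_distrib]
  map_smul' c B := by
    simp only [Matrix.smul_apply, smul_eq_mul, mul_sum, mul_left_comm, RingHom.id_apply]

def sumSq {k : ℕ} (B : Matrix (Fin k) (Fin k) ℝ) : ℝ := ∑ r, ∑ s, B r s ^ 2

section

variable {f : ℝ × ℝ → ℝ} {k : ℕ}

theorem objk_eq (θ : ℝ) (B : Matrix (Fin k) (Fin k) ℝ) :
    objk f θ k B = θ * gridPairing f k B - 2 * log k - ∑ r, ∑ s, B r s * log (B r s) := rfl

theorem sq_gridPairing_le (B : Matrix (Fin k) (Fin k) ℝ) :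
    gridPairing f k B ^ 2 ≤
      (∑ r : Fin k, ∑ s : Fin k, f ((r.1 + 1 : ℝ) / k, (s.1 + 1 : ℝ) / k) ^ 2) * sumSq B := by
  simp only [gridPairing, LinearMap.coe_mk, AddHom.coe_mk, sumSq, ← Fintype.sum_prod_type']
  exact sum_mul_sq_le_sq_mul_sq _ _ _

theorem convex_Mk : Convex ℝ (Mk k) := by
  rintro B ⟨hB0, hBr, hBc⟩ C ⟨hC0, hCr, hCc⟩ a b ha hb hab
  refine ⟨fun r s => ?_, fun r => ?_, fun s => ?_⟩
  · simp only [Matrix.add_apply, Matrix.smul_apply, smul_eq_mul]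
    have := hB0 r s; have := hC0 r s
    positivity
  · simp only [Matrix.add_apply, Matrix.smul_apply, smul_eq_mul, sum_add_distrib, ← mul_sum,
      hBr, hCr]
    linear_combination (1 / (k : ℝ)) * hab
  · simp only [Matrix.add_apply, Matrix.smul_apply, smul_eq_mul, sum_add_distrib, ← mul_sum,
      hBc, hCc]
    linear_combination (1 / (k : ℝ)) * hab

theorem mem_Icc_of_mem_Mk {B : Matrix (Fin k) (Fin k) ℝ} (hB : B ∈ Mk k) (r s : Fin k) :
    B r s ∈ Icc 0 (k : ℝ)⁻¹ :=
  ⟨hB.1 r s, one_div (k : ℝ) ▸ hB.2.1 r ▸ single_le_sum (fun i _ => hB.1 r i) (mem_univ s)⟩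

theorem objk_add_sumSq_sub_le {θ : ℝ} {A C : Matrix (Fin k) (Fin k) ℝ} (hA : A ∈ Mk k)
    (hmax : ∀ B ∈ Mk k, objk f θ k B ≤ objk f θ k A) (hC : C ∈ Mk k) :
    objk f θ k C + k / 4 * sumSq (C - A) ≤ objk f θ k A := by
  set M := (1 / 2 : ℝ) • C + (1 / 2 : ℝ) • A
  have hM : M ∈ Mk k := convex_Mk hC hA (by norm_num) (by norm_num) (by norm_num)
  have hentry : ∀ r s, M r s * log (M r s) ≤ (C r s * log (C r s) + A r s * log (A r s)) / 2
      - k / 8 * (C - A) r s ^ 2 := by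
    intro r s
    have h := (strongConvexOn_mul_log (k : ℝ)⁻¹).2 (mem_Icc_of_mem_Mk hC r s)
      (mem_Icc_of_mem_Mk hA r s) (show (0 : ℝ) ≤ 1 / 2 by norm_num)
      (show (0 : ℝ) ≤ 1 / 2 by norm_num) (by norm_num)
    simp only [smul_eq_mul, inv_inv, Real.norm_eq_abs, sq_abs] at h
    simp only [M, Matrix.add_apply, Matrix.sub_apply, Matrix.smul_apply, smul_eq_mul]
    linarith
  have hentropy : ∑ r, ∑ s, M r s * log (M r s) ≤ (∑ r, ∑ s, C r s * log (C r s)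
      + ∑ r, ∑ s, A r s * log (A r s)) / 2 - k / 8 * sumSq (C - A) := by
    calc _ ≤ ∑ r, ∑ s, ((C r s * log (C r s) + A r s * log (A r s)) / 2
            - k / 8 * (C - A) r s ^ 2) := sum_le_sum fun r _ => sum_le_sum fun s _ => hentry r s
      _ = _ := by simp only [sumSq, sum_sub_distrib, sum_add_distrib, ← sum_div, ← mul_sum]
  have hpairing : gridPairing f k M = (gridPairing f k C + gridPairing f k A) / 2 := by
    simp only [M, map_add, map_smul, smul_eq_mul]
    ring
  have hmid := hmax M hM
  rw [objk_eq, objk_eq, hpairing] at hmid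
  rw [objk_eq, objk_eq]
  linarith

theorem abs_gridPairing_sub_le (hk : 0 < k) {θ θ' : ℝ} {A A' : Matrix (Fin k) (Fin k) ℝ}
    (hA : A ∈ Mk k) (hmax : ∀ B ∈ Mk k, objk f θ k B ≤ objk f θ k A)
    (hA' : A' ∈ Mk k) (hmax' : ∀ B ∈ Mk k, objk f θ' k B ≤ objk f θ' k A') :
    |gridPairing f k A' - gridPairing f k A| ≤
      4 * (∑ r : Fin k, ∑ s : Fin k, f ((r.1 + 1 : ℝ) / k, (s.1 + 1 : ℝ) / k) ^ 2) / k
        * |θ' - θ| := by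
  set F := ∑ r : Fin k, ∑ s : Fin k, f ((r.1 + 1 : ℝ) / k, (s.1 + 1 : ℝ) / k) ^ 2
  set Δ := gridPairing f k A' - gridPairing f k A
  have hkR : (0 : ℝ) < k := by exact_mod_cast hk
  have hstrong := objk_add_sumSq_sub_le hA hmax hA'
  have hswap := hmax' A hA
  rw [objk_eq, objk_eq] at hstrong hswap
  have hsq : k / 4 * sumSq (A' - A) ≤ (θ' - θ) * Δ := by linear_combination hstrong + hswap
  have hCS : Δ ^ 2 ≤ F * sumSq (A' - A) := by
    simpa only [Δ, map_sub] using sq_gridPairing_le (f := f) (A' - A)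
  have hF : 0 ≤ F := by positivity
  have hquad : k * |Δ| * |Δ| ≤ 4 * F * |θ' - θ| * |Δ| :=
    calc k * |Δ| * |Δ| = k * Δ ^ 2 := by rw [mul_assoc, abs_mul_abs_self, sq]
      _ ≤ k * (F * sumSq (A' - A)) := by gcongr
      _ = 4 * F * (k / 4 * sumSq (A' - A)) := by ring
      _ ≤ 4 * F * ((θ' - θ) * Δ) := by gcongr
      _ ≤ 4 * F * |(θ' - θ) * Δ| := by gcongr; exact le_abs_self _
      _ = 4 * F * |θ' - θ| * |Δ| := by rw [abs_mul]; ring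
  rcases (abs_nonneg Δ).eq_or_lt with hzero | hpos
  · rw [← hzero]
    positivity
  · rw [div_mul_eq_mul_div, le_div_iff₀ hkR, mul_comm]
    exact le_of_mul_le_mul_right hquad hpos

theorem Wk_eq_objk {θ : ℝ} {A : Matrix (Fin k) (Fin k) ℝ} (hA : A ∈ Mk k)
    (hmax : ∀ B ∈ Mk k, objk f θ k B ≤ objk f θ k A) : Wk f k θ = objk f θ k A :=
  IsGreatest.csSup_eq ⟨⟨A, hA, rfl⟩, by rintro _ ⟨B, hB, rfl⟩; exact hmax B hB⟩

variable {A : ℝ → Matrix (Fin k) (Fin k) ℝ}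

theorem Wk_add_mul_sub_le
    (hA : ∀ θ, A θ ∈ Mk k ∧ ∀ B ∈ Mk k, objk f θ k B ≤ objk f θ k (A θ)) (θ θ' : ℝ) :
    Wk f k θ + (θ' - θ) * gridPairing f k (A θ) ≤ Wk f k θ' := by
  have hswap := (hA θ').2 (A θ) (hA θ).1
  rw [Wk_eq_objk (hA θ).1 (hA θ).2, Wk_eq_objk (hA θ').1 (hA θ').2]
  rw [objk_eq, objk_eq] at hswap ⊢
  linear_combination hswap

theorem continuousAt_gridPairing_comp (hk : 0 < k)
    (hA : ∀ θ, A θ ∈ Mk k ∧ ∀ B ∈ Mk k, objk f θ k B ≤ objk f θ k (A θ)) (θ : ℝ) :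
    ContinuousAt (fun θ => gridPairing f k (A θ)) θ := by
  rw [ContinuousAt, tendsto_iff_norm_sub_tendsto_zero]
  refine squeeze_zero (fun _ => norm_nonneg _)
    (fun θ' => abs_gridPairing_sub_le hk (hA θ).1 (hA θ).2 (hA θ').1 (hA θ').2) ?_
  have hcont : Continuous fun θ' : ℝ =>
      4 * (∑ r : Fin k, ∑ s : Fin k, f ((r.1 + 1 : ℝ) / k, (s.1 + 1 : ℝ) / k) ^ 2) / k
        * |θ' - θ| := by fun_prop
  simpa using hcont.tendsto θ

end

theorem Wk_convex_differentiable_general (f : ℝ × ℝ → ℝ)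
    (k : ℕ) (hk : 0 < k) (A : ℝ → Matrix (Fin k) (Fin k) ℝ)
    (hA : ∀ θ : ℝ, A θ ∈ Mk k ∧ (∀ B ∈ Mk k, objk f θ k B ≤ objk f θ k (A θ)) ∧
      (∀ B ∈ Mk k, (∀ C ∈ Mk k, objk f θ k C ≤ objk f θ k B) → B = A θ)) :
    ConvexOn ℝ Set.univ (Wk f k) ∧
    ∀ θ : ℝ, HasDerivAt (Wk f k)
      (∑ r, ∑ s, A θ r s * f ((r.1 + 1 : ℝ) / k, (s.1 + 1 : ℝ) / k)) θ := by
  have hmax : ∀ θ, A θ ∈ Mk k ∧ ∀ B ∈ Mk k, objk f θ k B ≤ objk f θ k (A θ) :=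
    fun θ => ⟨(hA θ).1, (hA θ).2.1⟩
  have hsub := Wk_add_mul_sub_le hmax
  refine ⟨convexOn_univ_of_forall_add_mul_sub_le hsub, fun θ => ?_⟩
  have hpairing : ∑ r, ∑ s, A θ r s * f ((r.1 + 1 : ℝ) / k, (s.1 + 1 : ℝ) / k) =
      gridPairing f k (A θ) := by
    simp only [gridPairing, LinearMap.coe_mk, AddHom.coe_mk, mul_comm]
  rw [hpairing]
  exact hasDerivAt_of_forall_add_mul_sub_le hsub (continuousAt_gridPairing_comp hk hmax θ)

/-- `θ ↦ W_k(f,θ)` is convex and differentiable, with derivative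
`W_k'(f,θ) = ∑_{r,s} A_{k,θ}(r,s) f(r/k, s/k)` where `A_{k,θ}` is the unique maximizer. -/
theorem Wk_convex_differentiable (f : ℝ × ℝ → ℝ) (hf : ContinuousOn f unitSq)
    (k : ℕ) (hk : 0 < k) (A : ℝ → Matrix (Fin k) (Fin k) ℝ)
    (hA : ∀ θ : ℝ, A θ ∈ Mk k ∧ (∀ B ∈ Mk k, objk f θ k B ≤ objk f θ k (A θ)) ∧
      (∀ B ∈ Mk k, (∀ C ∈ Mk k, objk f θ k C ≤ objk f θ k B) → B = A θ)) :
    ConvexOn ℝ Set.univ (Wk f k) ∧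
    ∀ θ : ℝ, HasDerivAt (Wk f k)
      (∑ r, ∑ s, A θ r s * f ((r.1 + 1 : ℝ) / k, (s.1 + 1 : ℝ) / k)) θ :=
  Wk_convex_differentiable_general f k hk A hA
end
end

section
/- Let R_{n,θ} (n ∈ ℕ, θ ∈ ℝ) be a one-parameter family of probability distributions on S_n, and let G_n : S_n × ℝ → ℝ be differentiable in its second argument. Fix θ₀ ∈ ℝ and suppose: (i) there exists C < ∞ such that E_{R_{n,θ₀}}[G_n(π,θ₀)²] ≤ C n³ for all n; and (ii) there exists a continuous function λ : ℝ → (0,∞) such that lim_{n→∞} R_{n,θ₀}({π : ∂G_n/∂θ(π,θ) ≤ −n² λ(θ) for all θ ∈ ℝ}) = 1. Then lim_{n→∞} R_{n,θ₀}({π : t ↦ G_n(π,t) has exactly one zero in ℝ}) = 1, and for every ε > 0 there exists M < ∞ such that limsup_{n→∞} R_{n,θ₀}({π : there exists t with G_n(π,t) = 0 and √n |t − θ₀| > M}) ≤ ε. -/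
/-!
On the event that `∂G_n/∂θ ≤ -n² λ`, the function `G_n(π, ·)` is strictly decreasing, with slope
at most `-n² c` on `[θ₀ - 1, θ₀ + 1]`, where `c > 0` is the minimum of `λ` there. Hence if moreover
`|G_n(π, θ₀)| < a ≤ n² c`, it has exactly one zero, and that zero lies within `a / (n² c)` of `θ₀`.
By Chebyshev's inequality and the moment bound, `|G_n(π, θ₀)| ≥ a` has probability at most
`C n³ / a²`: this is `C / (c² n)` for `a = n² c`, and `C / (c M)²` for `a = c M n^{3/2}`.
-/

open MeasureTheory Filter Topology

noncomputable section

open scoped Classical in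
/-- The probability assigned by the distribution with weights `r` on `S_n` to the event
`p`. -/
def Rprob (r : (n : ℕ) → Equiv.Perm (Fin n) → ℝ) (n : ℕ)
    (p : Equiv.Perm (Fin n) → Prop) : ℝ :=
  ∑ π : Equiv.Perm (Fin n), if p π then r n π else 0

open Set

theorem existsUnique_zero_and_mul_abs_sub_le {g : ℝ → ℝ} (hg : Differentiable ℝ g)
    (hanti : StrictAnti g) {a δ m : ℝ} (hδ : 0 ≤ δ)
    (hderiv : ∀ t ∈ Icc (a - δ) (a + δ), deriv g t ≤ -m) (hsmall : |g a| < m * δ) :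
    (∃! t, g t = 0) ∧ ∀ t, g t = 0 → m * |t - a| ≤ |g a| := by
  have hmvt : ∀ x ∈ Icc (a - δ) (a + δ), ∀ y ∈ Icc (a - δ) (a + δ), x ≤ y →
      g y - g x ≤ -m * (y - x) :=
    (convex_Icc _ _).image_sub_le_mul_sub_of_deriv_le hg.continuous.continuousOn
      hg.differentiableOn fun t ht => hderiv t (interior_subset ht)
  have ha : a ∈ Icc (a - δ) (a + δ) := ⟨by linarith, by linarith⟩
  have hsmall' := abs_lt.mp hsmall
  have hright := hmvt a ha (a + δ) ⟨by linarith, le_rfl⟩ (by linarith)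
  have hleft := hmvt (a - δ) ⟨le_rfl, by linarith⟩ a ha (by linarith)
  obtain ⟨t₀, ht₀, hzero⟩ := intermediate_value_Icc' (by linarith : a - δ ≤ a + δ)
    hg.continuous.continuousOn (⟨by linarith, by linarith⟩ : (0 : ℝ) ∈ Icc (g (a + δ)) (g (a - δ)))
  have huniq : ∀ t, g t = 0 → t = t₀ := fun t ht => hanti.injective (ht.trans hzero.symm)
  refine ⟨⟨t₀, hzero, huniq⟩, fun t ht => ?_⟩
  obtain rfl := huniq t ht
  rcases le_total a t with hat | hta
  · rw [abs_of_nonneg (sub_nonneg.mpr hat)]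
    linarith [hmvt a ha t ht₀ hat, le_abs_self (g a)]
  · rw [abs_of_nonpos (sub_nonpos.mpr hta)]
    linarith [hmvt t ht₀ a ha hta, neg_abs_le (g a)]

section Rprob

variable {r : (n : ℕ) → Equiv.Perm (Fin n) → ℝ} {n : ℕ} {p q : Equiv.Perm (Fin n) → Prop}

theorem Rprob_nonneg (h0 : ∀ π, 0 ≤ r n π) : 0 ≤ Rprob r n p :=
  Finset.sum_nonneg fun π _ => by split_ifs <;> simp [h0 π]

theorem Rprob_mono (h0 : ∀ π, 0 ≤ r n π) (h : ∀ π, p π → q π) :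
    Rprob r n p ≤ Rprob r n q :=
  Finset.sum_le_sum fun π _ => by
    split_ifs with hp hq <;> first | exact le_rfl | exact h0 π | exact absurd (h π hp) hq

theorem Rprob_le_one (h0 : ∀ π, 0 ≤ r n π) (h1 : ∑ π, r n π = 1) : Rprob r n p ≤ 1 :=
  h1 ▸ Finset.sum_le_sum fun π _ => by split_ifs <;> simp [h0 π]

theorem Rprob_not (h1 : ∑ π, r n π = 1) : Rprob r n (fun π => ¬p π) = 1 - Rprob r n p := by
  rw [eq_sub_iff_add_eq, ← h1, Rprob, Rprob, ← Finset.sum_add_distrib]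
  exact Finset.sum_congr rfl fun π _ => by by_cases h : p π <;> simp [h]

theorem Rprob_le_Rprob_and_add_Rprob_not (h0 : ∀ π, 0 ≤ r n π) :
    Rprob r n p ≤ Rprob r n (fun π => p π ∧ q π) + Rprob r n (fun π => ¬q π) := by
  rw [Rprob, Rprob, Rprob, ← Finset.sum_add_distrib]
  exact Finset.sum_le_sum fun π _ => by split_ifs <;> first | linarith [h0 π] | tauto

theorem Rprob_le_abs_le_sum_sq_div_sq (h0 : ∀ π, 0 ≤ r n π) (f : Equiv.Perm (Fin n) → ℝ)
    {a : ℝ} (ha : 0 < a) :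
    Rprob r n (fun π => a ≤ |f π|) ≤ (∑ π, r n π * f π ^ 2) / a ^ 2 := by
  rw [le_div_iff₀ (by positivity), Rprob, Finset.sum_mul]
  refine Finset.sum_le_sum fun π _ => ?_
  split_ifs with h
  · have : a ^ 2 ≤ f π ^ 2 := sq_abs (f π) ▸ pow_le_pow_left₀ ha.le h 2
    nlinarith [h0 π]
  · simpa using mul_nonneg (h0 π) (sq_nonneg (f π))

theorem Rprob_deriv_le_sub_le_Rprob_existsUnique_zero (h0 : ∀ π, 0 ≤ r n π)
    {g : Equiv.Perm (Fin n) → ℝ → ℝ} (hg : ∀ π, Differentiable ℝ (g π))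
    {lam : ℝ → ℝ} (hlam : ∀ t, 0 < lam t) {θ₀ c K a S : ℝ} (hK : 0 < K)
    (hc : ∀ t ∈ Icc (θ₀ - 1) (θ₀ + 1), c ≤ lam t) (ha : 0 < a) (haK : a ≤ K * c)
    (hS : ∑ π, r n π * g π θ₀ ^ 2 ≤ S) :
    Rprob r n (fun π => ∀ t, deriv (g π) t ≤ -K * lam t) - S / a ^ 2 ≤
      Rprob r n (fun π => (∃! t, g π t = 0) ∧ ∀ t, g π t = 0 → K * c * |t - θ₀| < a) := by
  have hsplit := Rprob_le_Rprob_and_add_Rprob_not h0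
    (p := fun π => ∀ t, deriv (g π) t ≤ -K * lam t) (q := fun π => |g π θ₀| < a)
  simp only [not_lt] at hsplit
  have hcheb := (Rprob_le_abs_le_sum_sq_div_sq h0 (fun π => g π θ₀) ha).trans
    (div_le_div_of_nonneg_right hS (sq_nonneg a))
  refine le_trans (b := Rprob r n fun π => (∀ t, deriv (g π) t ≤ -K * lam t) ∧ |g π θ₀| < a)
    (by linarith) (Rprob_mono h0 fun π ⟨hderiv, hsmall⟩ => ?_)
  have hanti : StrictAnti (g π) := strictAnti_of_deriv_neg fun t => by
    linarith [hderiv t, mul_pos hK (hlam t)]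
  obtain ⟨hunique, hnear⟩ := existsUnique_zero_and_mul_abs_sub_le (hg π) hanti zero_le_one
    (m := K * c) (fun t ht => by nlinarith [hderiv t, hc t ht]) (by linarith)
  exact ⟨hunique, fun t ht => (hnear t ht).trans_lt hsmall⟩

end Rprob

section Consistency

variable {r : (n : ℕ) → Equiv.Perm (Fin n) → ℝ} {G : (n : ℕ) → Equiv.Perm (Fin n) → ℝ → ℝ}
  {lam : ℝ → ℝ} {θ₀ C c : ℝ}

theorem tendsto_Rprob_existsUnique_zero
    (hr : ∀ n : ℕ, (∀ π, 0 ≤ r n π) ∧ ∑ π, r n π = 1)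
    (hG : ∀ n π, Differentiable ℝ (G n π))
    (hC : ∀ n : ℕ, ∑ π, r n π * G n π θ₀ ^ 2 ≤ C * (n : ℝ) ^ 3)
    (hlam : ∀ t, 0 < lam t) (hc : 0 < c) (hclam : ∀ t ∈ Icc (θ₀ - 1) (θ₀ + 1), c ≤ lam t)
    (hderiv : Tendsto (fun n : ℕ => Rprob r n
      (fun π => ∀ t, deriv (G n π) t ≤ -(n : ℝ) ^ 2 * lam t)) atTop (𝓝 1)) :
    Tendsto (fun n : ℕ => Rprob r n (fun π => ∃! t, G n π t = 0)) atTop (𝓝 1) := by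
  have hlow : Tendsto (fun n : ℕ => Rprob r n
      (fun π => ∀ t, deriv (G n π) t ≤ -(n : ℝ) ^ 2 * lam t) - C / c ^ 2 / n) atTop (𝓝 1) := by
    simpa using hderiv.sub (tendsto_const_div_atTop_nhds_zero_nat _)
  refine tendsto_of_tendsto_of_tendsto_of_le_of_le' hlow tendsto_const_nhds ?_
    (Eventually.of_forall fun n => Rprob_le_one (hr n).1 (hr n).2)
  filter_upwards [eventually_gt_atTop 0] with n hn
  have hroot := Rprob_deriv_le_sub_le_Rprob_existsUnique_zero (hr n).1 (hG n) hlam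
    (K := (n : ℝ) ^ 2) (by positivity) hclam (by positivity) le_rfl (hC n)
  rw [show C * (n : ℝ) ^ 3 / ((n : ℝ) ^ 2 * c) ^ 2 = C / c ^ 2 / n by field_simp] at hroot
  exact hroot.trans (Rprob_mono (hr n).1 fun π h => h.1)

theorem Rprob_exists_zero_far_le {n : ℕ} (h0 : ∀ π, 0 ≤ r n π) (h1 : ∑ π, r n π = 1)
    (hG : ∀ π, Differentiable ℝ (G n π)) (hC : ∑ π, r n π * G n π θ₀ ^ 2 ≤ C * (n : ℝ) ^ 3)
    (hlam : ∀ t, 0 < lam t) (hc : 0 < c) (hclam : ∀ t ∈ Icc (θ₀ - 1) (θ₀ + 1), c ≤ lam t)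
    (hn : 0 < n) {M : ℝ} (hM : 0 < M) (hMn : M ≤ √n) :
    Rprob r n (fun π => ∃ t, G n π t = 0 ∧ M < √n * |t - θ₀|) ≤
      1 - Rprob r n (fun π => ∀ t, deriv (G n π) t ≤ -(n : ℝ) ^ 2 * lam t) + C / (c * M) ^ 2 := by
  have hsqrt : √(n : ℝ) * √n = n := Real.mul_self_sqrt n.cast_nonneg
  have hle : c * M * n * √n ≤ (n : ℝ) ^ 2 * c :=
    calc c * M * n * √n ≤ c * √n * n * √n := by gcongr
      _ = (n : ℝ) ^ 2 * c := by rw [mul_right_comm _ _ (√(n : ℝ)), mul_assoc c, hsqrt]; ring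
  have hroot := Rprob_deriv_le_sub_le_Rprob_existsUnique_zero h0 hG hlam
    (K := (n : ℝ) ^ 2) (by positivity) hclam (by positivity) hle hC
  rw [show C * (n : ℝ) ^ 3 / (c * M * n * √n) ^ 2 = C / (c * M) ^ 2 by
    field_simp; rw [Real.sq_sqrt n.cast_nonneg]] at hroot
  calc Rprob r n (fun π => ∃ t, G n π t = 0 ∧ M < √n * |t - θ₀|)
      ≤ Rprob r n (fun π => ¬((∃! t, G n π t = 0) ∧
          ∀ t, G n π t = 0 → (n : ℝ) ^ 2 * c * |t - θ₀| < c * M * n * √n)) :=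
        Rprob_mono h0 fun π ⟨t, hzero, hfar⟩ ⟨_, hnear⟩ => by
          have hid : c * n * √n * (√n * |t - θ₀|) = (n : ℝ) ^ 2 * c * |t - θ₀| := by
            linear_combination (c * n * |t - θ₀|) * hsqrt
          linarith [hnear t hzero, mul_lt_mul_of_pos_left hfar (by positivity : 0 < c * n * √n)]
    _ ≤ _ := by rw [Rprob_not h1]; linarith

theorem limsup_Rprob_exists_zero_far_le
    (hr : ∀ n : ℕ, (∀ π, 0 ≤ r n π) ∧ ∑ π, r n π = 1)
    (hG : ∀ n π, Differentiable ℝ (G n π))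
    (hC : ∀ n : ℕ, ∑ π, r n π * G n π θ₀ ^ 2 ≤ C * (n : ℝ) ^ 3)
    (hlam : ∀ t, 0 < lam t) (hc : 0 < c) (hclam : ∀ t ∈ Icc (θ₀ - 1) (θ₀ + 1), c ≤ lam t)
    (hderiv : Tendsto (fun n : ℕ => Rprob r n
      (fun π => ∀ t, deriv (G n π) t ≤ -(n : ℝ) ^ 2 * lam t)) atTop (𝓝 1))
    {M : ℝ} (hM : 0 < M) :
    limsup (fun n : ℕ => Rprob r n (fun π => ∃ t, G n π t = 0 ∧ M < √n * |t - θ₀|)) atTop ≤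
      C / (c * M) ^ 2 := by
  have hupper : Tendsto (fun n : ℕ => 1 - Rprob r n
      (fun π => ∀ t, deriv (G n π) t ≤ -(n : ℝ) ^ 2 * lam t) + C / (c * M) ^ 2)
      atTop (𝓝 (C / (c * M) ^ 2)) := by
    simpa using ((tendsto_const_nhds (x := (1 : ℝ))).sub hderiv).add_const (C / (c * M) ^ 2)
  refine (limsup_le_limsup ?_ (isCoboundedUnder_le_of_le atTop fun n => Rprob_nonneg (hr n).1)
    hupper.isBoundedUnder_le).trans hupper.limsup_eq.le
  filter_upwards [eventually_ge_atTop ⌈M ^ 2⌉₊, eventually_gt_atTop 0] with n hMn hn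
  exact Rprob_exists_zero_far_le (hr n).1 (hr n).2 (hG n) (hC n) hlam hc hclam hn hM
    (Real.le_sqrt_of_sq_le (Nat.ceil_le.mp hMn))

end Consistency

/-- A general lemma producing `√n`-consistent estimators: if the
estimating function `G_n` satisfies a second-moment bound `E[G_n(π,θ₀)²] ≤ C n³` and its
`θ`-derivative is uniformly bounded above by `−n² λ(θ)` with probability tending to one,
then `G_n(π,·) = 0` has a unique root with probability tending to one, and the root is
`√n`-consistent for `θ₀`. -/
theorem general_sqrt_n_consistency
    (r : (n : ℕ) → Equiv.Perm (Fin n) → ℝ)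
    (hr : ∀ n : ℕ, (∀ π, 0 ≤ r n π) ∧ ∑ π : Equiv.Perm (Fin n), r n π = 1)
    (G : (n : ℕ) → Equiv.Perm (Fin n) → ℝ → ℝ)
    (hG : ∀ (n : ℕ) (π : Equiv.Perm (Fin n)), Differentiable ℝ (G n π))
    (θ₀ : ℝ)
    (hC : ∃ C : ℝ, ∀ n : ℕ,
      ∑ π : Equiv.Perm (Fin n), r n π * (G n π θ₀) ^ 2 ≤ C * (n : ℝ) ^ 3)
    (hlam : ∃ lam : ℝ → ℝ, Continuous lam ∧ (∀ t, 0 < lam t) ∧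
      Tendsto (fun n : ℕ => Rprob r n
          (fun π => ∀ t : ℝ, deriv (G n π) t ≤ -(n : ℝ) ^ 2 * lam t))
        atTop (𝓝 1)) :
    Tendsto (fun n : ℕ => Rprob r n (fun π => ∃! t : ℝ, G n π t = 0)) atTop (𝓝 1) ∧
    ∀ ε > 0, ∃ M : ℝ,
      Filter.limsup
        (fun n : ℕ => Rprob r n
          (fun π => ∃ t : ℝ, G n π t = 0 ∧ M < Real.sqrt n * |t - θ₀|))
        atTop ≤ ε := by
  obtain ⟨C, hC⟩ := hC
  obtain ⟨lam, hlam_cont, hlam_pos, hderiv⟩ := hlam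
  obtain ⟨x, -, hx⟩ := isCompact_Icc.exists_isMinOn
    (nonempty_Icc.mpr (by linarith : θ₀ - 1 ≤ θ₀ + 1)) hlam_cont.continuousOn
  have hc : 0 < lam x := hlam_pos x
  refine ⟨tendsto_Rprob_existsUnique_zero hr hG hC hlam_pos hc hx hderiv, fun ε hε => ?_⟩
  obtain ⟨M, hMε, hM⟩ := ((tendsto_const_nhds.div_atTop ((tendsto_pow_atTop two_ne_zero).comp
    (tendsto_id.const_mul_atTop hc))).eventually_le_const hε |>.and (eventually_gt_atTop 0)).exists
    (p := fun M : ℝ => C / (lam x * M) ^ 2 ≤ ε ∧ 0 < M)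
  exact ⟨M, (limsup_Rprob_exists_zero_far_le hr hG hC hlam_pos hc hx hderiv hM).trans hMε⟩
end
end
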